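/- arXiv:1801.06258 — 10 statements merged into one kernel-verified Lean document; each statement's English description precedes it below -/
import Mathlib

section
/- If there exists a diff from β_S to β_T under the family F(≤≥,←), then there exists a best diff F = (f_1,…,f_m) under F(≤≥,←) that contains no pair of operations f_i = (A ≤ a_i, B ← b_i) and f_j = (A ≥ a_j, B ← b_j) with a_i ≥ a_j; that is, no two operations of F with opposite condition directions have overlapping matched key sets. -/
open scoped Classical

/-- An operation of the family `F(≤≥,←)`: if `dir = true` the condition is `A ≤ a`,
otherwise the condition is `A ≥ a`; the modifier assigns `B ← b` to matched keys. -/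
structure OpIneqAsg where
  dir : Bool
  a : ℝ
  b : ℝ

/-- The condition of an operation, evaluated on an `A`-value `v`. -/
def OpIneqAsg.cond (f : OpIneqAsg) (v : ℤ) : Prop :=
  if f.dir then (v : ℝ) ≤ f.a else f.a ≤ (v : ℝ)

/-- Applying an operation: every key whose `A`-value satisfies the condition gets
its `B`-value replaced by `b`; other keys are unchanged. -/
noncomputable def OpIneqAsg.apply {K : Type*} (α : K → ℤ) (f : OpIneqAsg) (β : K → ℝ) :
    K → ℝ :=
  fun k => if f.cond (α k) then f.b else β k

/-- Successive application of a finite sequence of operations. -/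
noncomputable def applyOpsIneqAsg {K : Type*} (α : K → ℤ) (L : List OpIneqAsg) (β : K → ℝ) :
    K → ℝ :=
  L.foldl (fun β' f => f.apply α β') β

/-- `L` is a diff from `βS` to `βT` under `F(≤≥,←)`. -/
def IsDiffIneqAsg {K : Type*} (α : K → ℤ) (L : List OpIneqAsg) (βS βT : K → ℝ) : Prop :=
  applyOpsIneqAsg α L βS = βT

/-- `L` is a best diff: a diff of minimum cost (the cost being the number of operations). -/
def IsBestDiffIneqAsg {K : Type*} (α : K → ℤ) (L : List OpIneqAsg) (βS βT : K → ℝ) : Prop :=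
  IsDiffIneqAsg α L βS βT ∧
    ∀ L' : List OpIneqAsg, IsDiffIneqAsg α L' βS βT → L.length ≤ L'.length

/-!
Only the values of `A`, which are integers, matter. Normalize a diff from the back: once the
tail is free of overlaps, shrink the head operation `A ≤ a` to `A ≤ a'`, where `a'` lies
strictly below every threshold of a `≥`-operation in the tail and every integer in `(a', a]`
is matched by one of those later operations, so its `B`-value is overwritten anyway. The
`≥`-case is the mirror image under `A ↦ -A`. This keeps both the effect and the length of
the diff, so normalizing a diff of minimum length gives the theorem.
-/

noncomputable def evalAt (v : ℤ) (L : List OpIneqAsg) (x : ℝ) : ℝ :=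
  L.foldl (fun y f => if f.cond v then f.b else y) x

def NoOverlap (L : List OpIneqAsg) : Prop :=
  ∀ f ∈ L, ∀ g ∈ L, f.dir = true → g.dir = false → f.a < g.a

theorem applyOpsIneqAsg_apply {K : Type*} (α : K → ℤ) (L : List OpIneqAsg) (β : K → ℝ)
    (k : K) : applyOpsIneqAsg α L β k = evalAt (α k) L (β k) := by
  induction L generalizing β with
  | nil => rfl
  | cons f T ih => exact ih (f.apply α β)

theorem IsDiffIneqAsg.of_evalAt_eq {K : Type*} {α : K → ℤ} {L L' : List OpIneqAsg}
    {βS βT : K → ℝ} (hL : IsDiffIneqAsg α L βS βT)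
    (h : ∀ v x, evalAt v L' x = evalAt v L x) : IsDiffIneqAsg α L' βS βT := by
  rw [← hL]
  funext k
  simp only [applyOpsIneqAsg_apply, h]

theorem evalAt_eq_of_mem_of_cond {v : ℤ} {L : List OpIneqAsg} {g : OpIneqAsg} (hg : g ∈ L)
    (hgv : g.cond v) (x y : ℝ) : evalAt v L x = evalAt v L y := by
  obtain ⟨B, C, rfl⟩ := List.append_of_mem hg
  simp only [evalAt, List.foldl_append, List.foldl_cons, if_pos hgv]

theorem evalAt_cons_congr {v : ℤ} {f f' : OpIneqAsg} {T : List OpIneqAsg} (hb : f'.b = f.b)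
    (h : (∃ g ∈ T, g.cond v) ∨ (f'.cond v ↔ f.cond v)) (x : ℝ) :
    evalAt v (f' :: T) x = evalAt v (f :: T) x := by
  rcases h with ⟨g, hg, hgv⟩ | hiff
  · exact evalAt_eq_of_mem_of_cond hg hgv _ _
  · simp only [evalAt, List.foldl_cons, hiff, hb]

def OpIneqAsg.reflect (f : OpIneqAsg) : OpIneqAsg := ⟨!f.dir, -f.a, f.b⟩

theorem OpIneqAsg.cond_reflect (f : OpIneqAsg) (v : ℤ) : f.reflect.cond (-v) ↔ f.cond v := by
  cases hd : f.dir <;> simp [OpIneqAsg.cond, OpIneqAsg.reflect, hd]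

theorem exists_le_threshold (a : ℝ) (T : List OpIneqAsg) :
    ∃ a' ≤ a, (∀ g ∈ T, g.dir = false → a' < g.a) ∧
      ∀ v : ℤ, a' < v → (v : ℝ) ≤ a → ∃ g ∈ T, g.cond v := by
  induction T with
  | nil => exact ⟨a, le_rfl, by simp, fun v h1 h2 => absurd h2 (not_le.2 h1)⟩
  | cons g T ih =>
    obtain ⟨c, hca, hlt, hcov⟩ := ih
    cases hd : g.dir
    · -- every integer above `⌈g.a⌉ - 1` is matched by `g`
      have hg : ((⌈g.a⌉ - 1 : ℤ) : ℝ) < g.a := by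
        push_cast; linarith [Int.ceil_lt_add_one g.a]
      refine ⟨min c ((⌈g.a⌉ - 1 : ℤ) : ℝ), (min_le_left _ _).trans hca, ?_, ?_⟩
      · rintro q (_ | ⟨_, hq⟩) hqd
        · exact (min_le_right _ _).trans_lt hg
        · exact (min_le_left _ _).trans_lt (hlt q hq hqd)
      · intro v hv hva
        rcases min_lt_iff.1 hv with hcv | hgv
        · obtain ⟨q, hq, hqv⟩ := hcov v hcv hva
          exact ⟨q, List.mem_cons_of_mem g hq, hqv⟩
        · have : ⌈g.a⌉ ≤ v := Int.sub_one_lt_iff.1 (by exact_mod_cast hgv)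
          refine ⟨g, List.mem_cons_self, ?_⟩
          simpa [OpIneqAsg.cond, hd] using Int.ceil_le.1 this
    · refine ⟨c, hca, ?_, fun v hv hva => ?_⟩
      · rintro q (_ | ⟨_, hq⟩) hqd
        · exact absurd hd (by simp [hqd])
        · exact hlt q hq hqd
      · obtain ⟨q, hq, hqv⟩ := hcov v hv hva
        exact ⟨q, List.mem_cons_of_mem g hq, hqv⟩

theorem exists_ge_threshold (a : ℝ) (T : List OpIneqAsg) :
    ∃ a' ≥ a, (∀ g ∈ T, g.dir = true → g.a < a') ∧
      ∀ v : ℤ, a ≤ v → (v : ℝ) < a' → ∃ g ∈ T, g.cond v := by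
  obtain ⟨c, hca, hlt, hcov⟩ := exists_le_threshold (-a) (T.map OpIneqAsg.reflect)
  refine ⟨-c, by linarith, fun g hg hd => ?_, fun v h1 h2 => ?_⟩
  · have := hlt g.reflect (List.mem_map_of_mem hg) (by simp [OpIneqAsg.reflect, hd])
    simp only [OpIneqAsg.reflect] at this
    linarith
  · obtain ⟨_, hg, hgv⟩ := hcov (-v) (by push_cast; linarith) (by push_cast; linarith)
    obtain ⟨g, hgT, rfl⟩ := List.mem_map.1 hg
    exact ⟨g, hgT, (g.cond_reflect v).1 hgv⟩

theorem exists_trim (f : OpIneqAsg) (T : List OpIneqAsg) :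
    ∃ f' : OpIneqAsg, f'.b = f.b ∧ (∀ v, (∃ g ∈ T, g.cond v) ∨ (f'.cond v ↔ f.cond v)) ∧
      ∀ g ∈ T, (f'.dir = true → g.dir = false → f'.a < g.a) ∧
        (g.dir = true → f'.dir = false → g.a < f'.a) := by
  cases hd : f.dir
  · obtain ⟨a', ha, hlt, hcov⟩ := exists_ge_threshold f.a T
    refine ⟨⟨false, a', f.b⟩, rfl, fun v => ?_, fun g hg => ⟨by simp, fun hgd _ => hlt g hg hgd⟩⟩
    by_cases hc : ∃ g ∈ T, g.cond v
    · exact Or.inl hc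
    · simp only [OpIneqAsg.cond, hd, Bool.false_eq_true, if_false]
      exact Or.inr ⟨ha.trans, fun hv => not_lt.1 fun hv' => hc (hcov v hv hv')⟩
  · obtain ⟨a', ha, hlt, hcov⟩ := exists_le_threshold f.a T
    refine ⟨⟨true, a', f.b⟩, rfl, fun v => ?_, fun g hg => ⟨fun _ hgd => hlt g hg hgd, by simp⟩⟩
    by_cases hc : ∃ g ∈ T, g.cond v
    · exact Or.inl hc
    · simp only [OpIneqAsg.cond, hd, if_true]
      exact Or.inr ⟨fun hv => hv.trans ha, fun hv => not_lt.1 fun hv' => hc (hcov v hv' hv)⟩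

theorem NoOverlap.cons {f : OpIneqAsg} {T : List OpIneqAsg} (hT : NoOverlap T)
    (hf : ∀ g ∈ T, (f.dir = true → g.dir = false → f.a < g.a) ∧
      (g.dir = true → f.dir = false → g.a < f.a)) :
    NoOverlap (f :: T) := by
  rintro p (_ | ⟨_, hp⟩) q (_ | ⟨_, hq⟩) hpd hqd
  · exact Bool.noConfusion (hpd.symm.trans hqd)
  · exact (hf q hq).1 hpd hqd
  · exact (hf p hp).2 hpd hqd
  · exact hT p hp q hq hpd hqd

theorem exists_noOverlap_evalAt_eq (L : List OpIneqAsg) :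
    ∃ L' : List OpIneqAsg, L'.length = L.length ∧
      (∀ v x, evalAt v L' x = evalAt v L x) ∧ NoOverlap L' := by
  induction L with
  | nil => exact ⟨[], rfl, fun _ _ => rfl, by simp [NoOverlap]⟩
  | cons f T ih =>
    obtain ⟨T', hlen, heval, hT'⟩ := ih
    obtain ⟨f', hb, hcov, hf'⟩ := exists_trim f T'
    exact ⟨f' :: T', by simp [hlen],
      fun v x => (evalAt_cons_congr hb (hcov v) x).trans (heval v _), hT'.cons hf'⟩

theorem exists_best_diff_no_overlap_general {K : Type*} (α : K → ℤ) (βS βT : K → ℤ)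
    (h : ∃ L : List OpIneqAsg,
      IsDiffIneqAsg α L (fun k => (βS k : ℝ)) (fun k => (βT k : ℝ))) :
    ∃ L : List OpIneqAsg,
      IsBestDiffIneqAsg α L (fun k => (βS k : ℝ)) (fun k => (βT k : ℝ)) ∧
      ∀ f ∈ L, ∀ g ∈ L, f.dir = true → g.dir = false → f.a < g.a := by
  obtain ⟨L, hL, hmin⟩ := (measure List.length).wf.has_min _ h
  obtain ⟨L', hlen, heval, hL'⟩ := exists_noOverlap_evalAt_eq L
  refine ⟨L', ⟨IsDiffIneqAsg.of_evalAt_eq hL heval, fun L'' hL'' => ?_⟩, hL'⟩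
  exact hlen ▸ not_lt.1 (hmin L'' hL'')

/-- If there exists a diff from `βS` to `βT` under `F(≤≥,←)`, then there exists a best diff
containing no pair of operations `(A ≤ a_i, B ← b_i)` and `(A ≥ a_j, B ← b_j)` with
`a_i ≥ a_j`. -/
theorem exists_best_diff_no_overlap {K : Type*} [Fintype K] (α : K → ℤ) (βS βT : K → ℤ)
    (h : ∃ L : List OpIneqAsg,
      IsDiffIneqAsg α L (fun k => (βS k : ℝ)) (fun k => (βT k : ℝ))) :
    ∃ L : List OpIneqAsg,
      IsBestDiffIneqAsg α L (fun k => (βS k : ℝ)) (fun k => (βT k : ℝ)) ∧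
      ∀ f ∈ L, ∀ g ∈ L, f.dir = true → g.dir = false → f.a < g.a :=
  exists_best_diff_no_overlap_general α βS βT h
end

section
/- For the SubsetSum instance, the set of diffs from β_S to β_T under the family F(≤≥,+) is nonempty, and its best diff has cost at most n+1. In particular, the sequence (f_0,…,f_n) with f_k = (A ≥ k, B ← B + s_k) for k ∈ {0,…,n} is a diff from β_S to β_T of cost n+1. -/
open scoped Classical

/-- An operation of the family `F(≤≥,+)`: if `dir = true` the condition is `A ≤ a`,
otherwise the condition is `A ≥ a`; the modifier is the increment `B ← B + b`. -/
structure OpIneqAdd where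
  dir : Bool
  a : ℝ
  b : ℝ

/-- The condition of an operation, evaluated on an `A`-value `v`. -/
def OpIneqAdd.cond (f : OpIneqAdd) (v : ℤ) : Prop :=
  if f.dir then (v : ℝ) ≤ f.a else f.a ≤ (v : ℝ)

/-- Applying an operation: every key whose `A`-value satisfies the condition gets
its `B`-value incremented by `b`; other keys are unchanged. -/
noncomputable def OpIneqAdd.apply {K : Type*} (α : K → ℤ) (f : OpIneqAdd) (β : K → ℝ) :
    K → ℝ :=
  fun k => if f.cond (α k) then β k + f.b else β k

/-- Successive application of a finite sequence of operations. -/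
noncomputable def applyOpsIneqAdd {K : Type*} (α : K → ℤ) (L : List OpIneqAdd) (β : K → ℝ) :
    K → ℝ :=
  L.foldl (fun β' f => f.apply α β') β

/-- `L` is a diff from `βS` to `βT` under `F(≤≥,+)`. -/
def IsDiffIneqAdd {K : Type*} (α : K → ℤ) (L : List OpIneqAdd) (βS βT : K → ℝ) : Prop :=
  applyOpsIneqAdd α L βS = βT

/-- `L` is a best diff: a diff of minimum cost (the cost being the number of operations). -/
def IsBestDiffIneqAdd {K : Type*} (α : K → ℤ) (L : List OpIneqAdd) (βS βT : K → ℝ) : Prop :=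
  IsDiffIneqAdd α L βS βT ∧
    ∀ L' : List OpIneqAdd, IsDiffIneqAdd α L' βS βT → L.length ≤ L'.length

/-- `A`-values of the SubsetSum instance: `α k = k` on the key set `K = {0,…,n}`. -/
def ssAlpha (n : ℕ) : Fin (n + 1) → ℤ := fun k => ((k : ℕ) : ℤ)

/-- Source `B`-values of the SubsetSum instance: identically `0`. -/
def ssBS (n : ℕ) : Fin (n + 1) → ℝ := fun _ => 0

/-- Target `B`-values of the SubsetSum instance: `β_T k = b_k = ∑_{ℓ=0}^{k} s ℓ`. -/
noncomputable def ssBT (n : ℕ) (s : ℕ → ℤ) : Fin (n + 1) → ℝ :=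
  fun k => ((∑ ℓ ∈ Finset.range ((k : ℕ) + 1), s ℓ : ℤ) : ℝ)

lemma applyOps_eq {K : Type*} (α : K → ℤ) (L : List OpIneqAdd) (β : K → ℝ) (k : K) :
    applyOpsIneqAdd α L β k = β k + (L.map fun f => if f.cond (α k) then f.b else 0).sum := by
  induction L generalizing β with
  | nil => simp [applyOpsIneqAdd]
  | cons f L ih =>
    simp only [applyOpsIneqAdd, List.foldl_cons, List.map_cons, List.sum_cons]
    rw [show (List.foldl (fun β' g => g.apply α β') (f.apply α β) L)
        = applyOpsIneqAdd α L (f.apply α β) from rfl, ih]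
    unfold OpIneqAdd.apply
    by_cases h : f.cond (α k) <;> simp [h] <;> ring

lemma list_sum_range (f : ℕ → ℝ) (m : ℕ) :
    ((List.range m).map f).sum = ∑ i ∈ Finset.range m, f i := by
  induction m with
  | zero => simp
  | succ m ih => simp [List.range_succ, Finset.sum_range_succ, ih]

/-- For the SubsetSum instance (positive integers `s 1, …, s n`, positive `t`, `s 0 = -t`),
the set of diffs from `β_S` to `β_T` under `F(≤≥,+)` is nonempty and every best diff has
cost at most `n + 1`; in particular the sequence `(f_0, …, f_n)` with
`f_k = (A ≥ k, B ← B + s k)` is a diff of cost `n + 1`. -/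
theorem subsetSum_diff_nonempty_best_cost_le (n : ℕ) (s : ℕ → ℤ) (t : ℤ)
    (ht : 0 < t) (hs0 : s 0 = -t) (hpos : ∀ i, 1 ≤ i → i ≤ n → 0 < s i) :
    IsDiffIneqAdd (ssAlpha n)
        ((List.range (n + 1)).map fun k : ℕ => (⟨false, (k : ℝ), (s k : ℝ)⟩ : OpIneqAdd))
        (ssBS n) (ssBT n s) ∧
      ((List.range (n + 1)).map fun k : ℕ => (⟨false, (k : ℝ), (s k : ℝ)⟩ : OpIneqAdd)).length
          = n + 1 ∧
      (∃ L : List OpIneqAdd, IsDiffIneqAdd (ssAlpha n) L (ssBS n) (ssBT n s)) ∧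
      ∀ L : List OpIneqAdd,
        IsBestDiffIneqAdd (ssAlpha n) L (ssBS n) (ssBT n s) → L.length ≤ n + 1 := by
  have hdiff : IsDiffIneqAdd (ssAlpha n)
      ((List.range (n + 1)).map fun k : ℕ => (⟨false, (k : ℝ), (s k : ℝ)⟩ : OpIneqAdd))
      (ssBS n) (ssBT n s) := by
    funext k
    rw [applyOps_eq]
    simp only [ssBS, List.map_map, Function.comp_def, zero_add]
    rw [list_sum_range]
    have hcond : ∀ ℓ : ℕ,
        (OpIneqAdd.cond ⟨false, (ℓ : ℝ), (s ℓ : ℝ)⟩ (ssAlpha n k)) ↔ ℓ ≤ (k : ℕ) := by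
      intro ℓ
      simp only [OpIneqAdd.cond, ssAlpha, if_neg (by simp : ¬ (false = true))]
      exact_mod_cast Iff.rfl
    have : (∑ ℓ ∈ Finset.range (n + 1),
        if (OpIneqAdd.cond ⟨false, (ℓ : ℝ), (s ℓ : ℝ)⟩ (ssAlpha n k)) then (s ℓ : ℝ) else 0)
        = ∑ ℓ ∈ Finset.range ((k : ℕ) + 1), (s ℓ : ℝ) := by
      rw [Finset.sum_congr rfl (fun ℓ _ => by rw [if_congr (hcond ℓ) rfl rfl])]
      rw [← Finset.sum_subset (Finset.range_subset_range.2 (by omega : (k : ℕ) + 1 ≤ n + 1))]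
      · exact Finset.sum_congr rfl (fun ℓ hℓ => by
          rw [if_pos (by simpa [Nat.lt_succ_iff] using Finset.mem_range.1 hℓ)])
      · intro ℓ hℓ hℓ'
        rw [if_neg (by simp only [Finset.mem_range, Nat.lt_succ_iff] at hℓ hℓ'; omega)]
    rw [this, ssBT]
    push_cast
    rfl
  refine ⟨hdiff, by simp, ⟨_, hdiff⟩, fun L hL => ?_⟩
  have := hL.2 _ hdiff
  simpa using this
end

section
/- For the SubsetSum instance, the set of diffs from β_S to β_T under F(≤≥,+) contains a bounded best diff, i.e., a best diff F = (f'_1,…,f'_m) in which every operation f'_i has condition A ≤ a'_i or A ≥ a'_i with a'_i an integer in {0,…,n}. -/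
open scoped Classical

/-!
On integer `A`-values in `[lo, hi]`, the condition `A ≤ a` holds exactly when
`A ≤ min ⌊a⌋ hi`, and `A ≥ a` exactly when `A ≥ max ⌈a⌉ lo`; when the rounded
threshold leaves `[lo, hi]` the operation touches no key and may be replaced by a
zero increment at threshold `lo` or `hi`. Clamping every threshold of a best diff
therefore yields a diff of the same cost. A best diff exists because the SubsetSum
target is reachable: apply `A ≥ ℓ`, `B ← B + s ℓ` for `ℓ = 0, …, n`.
-/

namespace OpIneqAdd

noncomputable def increment (f : OpIneqAdd) (v : ℤ) : ℝ :=
  if f.cond v then f.b else 0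

noncomputable def clamp (lo hi : ℤ) (f : OpIneqAdd) : OpIneqAdd :=
  if f.dir then
    if ⌊f.a⌋ < lo then ⟨true, lo, 0⟩ else ⟨true, (min ⌊f.a⌋ hi : ℤ), f.b⟩
  else
    if hi < ⌈f.a⌉ then ⟨false, hi, 0⟩ else ⟨false, (max ⌈f.a⌉ lo : ℤ), f.b⟩

theorem exists_clamp_a_eq {lo hi : ℤ} (h : lo ≤ hi) (f : OpIneqAdd) :
    ∃ a' : ℤ, lo ≤ a' ∧ a' ≤ hi ∧ (f.clamp lo hi).a = a' := by
  unfold clamp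
  split_ifs with _ hlo hhi
  · exact ⟨lo, le_rfl, h, rfl⟩
  · exact ⟨_, le_min (not_lt.1 hlo) h, min_le_right _ _, rfl⟩
  · exact ⟨hi, h, le_rfl, rfl⟩
  · exact ⟨_, le_max_right _ _, max_le (not_lt.1 hhi) h, rfl⟩

theorem increment_clamp {lo hi v : ℤ} (hlo : lo ≤ v) (hhi : v ≤ hi) (f : OpIneqAdd) :
    (f.clamp lo hi).increment v = f.increment v := by
  obtain ⟨_ | _, a, b⟩ := f
  · by_cases h : hi < ⌈a⌉
    · have : ¬ a ≤ v := fun hav => (Int.ceil_le.2 hav).not_gt (hhi.trans_lt h)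
      simp [clamp, increment, cond, h, this]
    · simp [clamp, increment, cond, h, Int.ceil_le, hlo]
  · by_cases h : ⌊a⌋ < lo
    · have : ¬ (v : ℝ) ≤ a := fun hva => (Int.le_floor.2 hva).not_gt (h.trans_le hlo)
      simp [clamp, increment, cond, h, this]
    · simp [clamp, increment, cond, h, Int.le_floor, hhi]

end OpIneqAdd

open OpIneqAdd

section

variable {K : Type*} {α : K → ℤ}

theorem applyOpsIneqAdd_apply (L : List OpIneqAdd) (β : K → ℝ) (k : K) :
    applyOpsIneqAdd α L β k = β k + (L.map fun f => f.increment (α k)).sum := by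
  induction L generalizing β with
  | nil => simp [applyOpsIneqAdd]
  | cons f L ih =>
    simp only [applyOpsIneqAdd, List.foldl_cons, List.map_cons, List.sum_cons] at ih ⊢
    rw [ih]
    simp only [OpIneqAdd.apply, increment]
    split_ifs <;> ring

theorem applyOpsIneqAdd_map_clamp {lo hi : ℤ} (hα : ∀ k, lo ≤ α k ∧ α k ≤ hi)
    (L : List OpIneqAdd) (β : K → ℝ) :
    applyOpsIneqAdd α (L.map (clamp lo hi)) β = applyOpsIneqAdd α L β := by
  funext k
  simp only [applyOpsIneqAdd_apply, List.map_map, Function.comp_def,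
    increment_clamp (hα k).1 (hα k).2]

theorem exists_isBestDiffIneqAdd {L : List OpIneqAdd} {βS βT : K → ℝ}
    (hL : IsDiffIneqAdd α L βS βT) : ∃ F, IsBestDiffIneqAdd α F βS βT := by
  have hcost : ∃ m, ∃ L : List OpIneqAdd, IsDiffIneqAdd α L βS βT ∧ L.length = m :=
    ⟨_, L, hL, rfl⟩
  obtain ⟨F, hF, hlen⟩ := Nat.find_spec hcost
  exact ⟨F, hF, fun L' hL' => hlen ▸ Nat.find_min' hcost ⟨L', hL', rfl⟩⟩

theorem exists_isBestDiffIneqAdd_clamped {lo hi : ℤ} (h : lo ≤ hi)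
    (hα : ∀ k, lo ≤ α k ∧ α k ≤ hi) {L : List OpIneqAdd} {βS βT : K → ℝ}
    (hL : IsDiffIneqAdd α L βS βT) :
    ∃ F, IsBestDiffIneqAdd α F βS βT ∧ ∀ f ∈ F, ∃ a' : ℤ, lo ≤ a' ∧ a' ≤ hi ∧ f.a = a' := by
  obtain ⟨F, hF, hmin⟩ := exists_isBestDiffIneqAdd hL
  refine ⟨F.map (clamp lo hi), ⟨?_, fun L' hL' => ?_⟩, ?_⟩
  · rwa [IsDiffIneqAdd, applyOpsIneqAdd_map_clamp hα]
  · exact (List.length_map _).trans_le (hmin L' hL')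
  · simp only [List.mem_map]
    rintro _ ⟨f, -, rfl⟩
    exact exists_clamp_a_eq h f

end

noncomputable def ssPrefixSumDiff (n : ℕ) (s : ℕ → ℤ) : List OpIneqAdd :=
  (List.range (n + 1)).map fun ℓ : ℕ => ⟨false, ℓ, s ℓ⟩

theorem isDiffIneqAdd_ssPrefixSumDiff (n : ℕ) (s : ℕ → ℤ) :
    IsDiffIneqAdd (ssAlpha n) (ssPrefixSumDiff n s) (ssBS n) (ssBT n s) := by
  funext k
  have hinc (ℓ : ℕ) : (⟨false, ℓ, s ℓ⟩ : OpIneqAdd).increment (ssAlpha n k) =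
      if ℓ ≤ (k : ℕ) then (s ℓ : ℝ) else 0 := by
    simp [increment, OpIneqAdd.cond, ssAlpha]
  have hrange : (Finset.range (n + 1)).filter (· ≤ (k : ℕ)) = Finset.range ((k : ℕ) + 1) := by
    ext ℓ
    simp only [Finset.mem_filter, Finset.mem_range]
    omega
  rw [applyOpsIneqAdd_apply, ssPrefixSumDiff, List.map_map, Function.comp_def]
  simp only [hinc, ssBS, ssBT, zero_add, Int.cast_sum]
  rw [← List.sum_toFinset _ List.nodup_range, List.toFinset_range, ← Finset.sum_filter, hrange]

theorem subsetSum_exists_bounded_best_diff_general (n : ℕ) (s : ℕ → ℤ) :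
    ∃ F : List OpIneqAdd,
      IsBestDiffIneqAdd (ssAlpha n) F (ssBS n) (ssBT n s) ∧
      ∀ f ∈ F, ∃ a' : ℤ, 0 ≤ a' ∧ a' ≤ (n : ℤ) ∧ f.a = (a' : ℝ) :=
  exists_isBestDiffIneqAdd_clamped (Int.natCast_nonneg n)
    (fun k => ⟨Int.natCast_nonneg _, Int.ofNat_le.2 (Nat.le_of_lt_succ k.isLt)⟩)
    (isDiffIneqAdd_ssPrefixSumDiff n s)

/-- For the SubsetSum instance, the set of diffs from `β_S` to `β_T` under `F(≤≥,+)`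
contains a bounded best diff: a best diff in which every operation has a condition
`A ≤ a'` or `A ≥ a'` whose threshold `a'` is an integer in `{0,…,n}`. -/
theorem subsetSum_exists_bounded_best_diff (n : ℕ) (s : ℕ → ℤ) (t : ℤ)
    (ht : 0 < t) (hs0 : s 0 = -t) (hpos : ∀ i, 1 ≤ i → i ≤ n → 0 < s i) :
    ∃ F : List OpIneqAdd,
      IsBestDiffIneqAdd (ssAlpha n) F (ssBS n) (ssBT n s) ∧
      ∀ f ∈ F, ∃ a' : ℤ, 0 ≤ a' ∧ a' ≤ (n : ℤ) ∧ f.a = (a' : ℝ) :=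
  subsetSum_exists_bounded_best_diff_general n s
end

section
/- For the SubsetSum instance, the set of diffs from β_S to β_T under F(≤≥,+) contains a best diff F such that for every k ∈ {1,…,n}, F contains exactly one gap operation at k, and this gap operation is either (A ≤ k−1, B ← B − s_k) or (A ≥ k, B ← B + s_k). -/
open scoped Classical

/-- A gap operation at `k ∈ {1,…,n}` is an operation with condition `A ≤ k - 1`
or with condition `A ≥ k`. -/
def IsGapOpAt (k : ℕ) (f : OpIneqAdd) : Prop :=
  (f.dir = true ∧ f.a = (k : ℝ) - 1) ∨ (f.dir = false ∧ f.a = (k : ℝ))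

/-
On integer keys an operation `A ≤ a` (resp. `A ≥ a`) adds its increment on one side of a single
gap, `gapIdx = ⌊a⌋ + 1` (resp. `⌈a⌉`), and moving its threshold to `gapIdx - 1` (resp. `gapIdx`)
does not change its action. Since `b_k - b_(k-1) = s_k ≠ 0`, every diff has an operation with its
gap at each `k ∈ {1,…,n}`, hence at least `n` operations. If some diff has exactly `n`, their gaps
are pairwise distinct, so after moving the thresholds every gap `k` carries exactly one operation,
whose increment must be `-s_k` (for `A ≤ k - 1`) or `s_k` (for `A ≥ k`). Otherwise the `n + 1`
operations `A ≥ m, B ← B + s_m` (`0 ≤ m ≤ n`) form a best diff.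
-/

namespace OpIneqAdd

noncomputable def contrib (f : OpIneqAdd) (v : ℤ) : ℝ := if f.cond v then f.b else 0

noncomputable def gapIdx (f : OpIneqAdd) : ℤ := if f.dir then ⌊f.a⌋ + 1 else ⌈f.a⌉

theorem cond_iff (f : OpIneqAdd) (v : ℤ) :
    f.cond v ↔ if f.dir then v < f.gapIdx else f.gapIdx ≤ v := by
  rcases f with ⟨_ | _, a, b⟩ <;>
    simp [cond, gapIdx, Int.le_floor, Int.ceil_le]

noncomputable def normalize (f : OpIneqAdd) : OpIneqAdd :=
  ⟨f.dir, ((if f.dir then f.gapIdx - 1 else f.gapIdx : ℤ) : ℝ), f.b⟩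

@[simp]
theorem gapIdx_normalize (f : OpIneqAdd) : f.normalize.gapIdx = f.gapIdx := by
  rcases f with ⟨_ | _, a, b⟩ <;> simp [normalize, gapIdx]

theorem cond_normalize (f : OpIneqAdd) : f.normalize.cond = f.cond := by
  funext v
  rw [eq_iff_iff, cond_iff, cond_iff, gapIdx_normalize]
  rfl

theorem apply_normalize {K : Type*} (α : K → ℤ) (f : OpIneqAdd) :
    f.normalize.apply α = f.apply α := by
  funext β k
  simp only [apply, cond_normalize]
  rfl

@[simp]
theorem normalize_normalize (f : OpIneqAdd) : f.normalize.normalize = f.normalize := by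
  rw [normalize, gapIdx_normalize]
  rfl

theorem isGapOpAt_normalize_iff (f : OpIneqAdd) (k : ℕ) :
    IsGapOpAt k f.normalize ↔ f.gapIdx = k := by
  rcases f with ⟨_ | _, a, b⟩ <;> simp [IsGapOpAt, normalize] <;> norm_cast

theorem contrib_sub_contrib_pred (f : OpIneqAdd) (k : ℤ) :
    f.contrib k - f.contrib (k - 1) =
      if f.gapIdx = k then (if f.dir then -f.b else f.b) else 0 := by
  simp only [contrib, cond_iff]
  generalize f.gapIdx = g
  cases f.dir <;> simp only [Bool.false_eq_true, if_true, if_false] <;> split_ifs <;>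
    first | omega | ring

theorem normalize_eq_of_gapIdx_eq {f : OpIneqAdd} {k : ℕ} {c : ℝ} (hk : f.gapIdx = k)
    (hc : (if f.dir then -f.b else f.b) = c) :
    f.normalize = ⟨true, (k : ℝ) - 1, -c⟩ ∨ f.normalize = ⟨false, (k : ℝ), c⟩ := by
  subst hc
  rcases f with ⟨_ | _, a, b⟩ <;> simp_all [normalize]

@[simp]
theorem gapIdx_mk_false (m : ℕ) (c : ℝ) : gapIdx ⟨false, m, c⟩ = m := by
  simp [gapIdx]

@[simp]
theorem normalize_mk_false (m : ℕ) (c : ℝ) : normalize ⟨false, m, c⟩ = ⟨false, m, c⟩ := by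
  simp [normalize]

theorem contrib_mk_false (m : ℕ) (c : ℝ) (v : ℤ) :
    contrib ⟨false, m, c⟩ v = if (m : ℤ) ≤ v then c else 0 := by
  simp [contrib, cond_iff]

end OpIneqAdd

open OpIneqAdd

section

variable {K : Type*} (α : K → ℤ)

theorem applyOpsIneqAdd_apply_s3 (L : List OpIneqAdd) (β : K → ℝ) (k : K) :
    applyOpsIneqAdd α L β k = β k + ∑ i : Fin L.length, (L.get i).contrib (α k) := by
  simp only [List.get_eq_getElem]
  rw [Fin.sum_univ_fun_getElem L (fun g => g.contrib (α k))]
  induction L generalizing β with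
  | nil => simp [applyOpsIneqAdd]
  | cons f L ih =>
    change applyOpsIneqAdd α L (f.apply α β) k = _
    rw [ih, List.map_cons, List.sum_cons, OpIneqAdd.apply, contrib]
    split_ifs <;> ring

theorem applyOpsIneqAdd_map_normalize (L : List OpIneqAdd) :
    applyOpsIneqAdd α (L.map normalize) = applyOpsIneqAdd α L := by
  funext β
  simp only [applyOpsIneqAdd, List.foldl_map, apply_normalize]

end

theorem isDiffIneqAdd_map_normalize {K : Type*} {α : K → ℤ} {L : List OpIneqAdd}
    {βS βT : K → ℝ} (hL : IsDiffIneqAdd α L βS βT) :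
    IsDiffIneqAdd α (L.map normalize) βS βT := by
  rwa [IsDiffIneqAdd, applyOpsIneqAdd_map_normalize]

section SubsetSum

variable {n : ℕ} {s : ℕ → ℤ} {L : List OpIneqAdd}

theorem isDiffIneqAdd_ss_iff :
    IsDiffIneqAdd (ssAlpha n) L (ssBS n) (ssBT n s) ↔
      ∀ v ≤ n,
        ∑ i : Fin L.length, (L.get i).contrib v = ∑ ℓ ∈ Finset.range (v + 1), (s ℓ : ℝ) := by
  simp only [IsDiffIneqAdd, funext_iff, applyOpsIneqAdd_apply_s3, ssBS, ssAlpha, ssBT, zero_add,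
    Fin.forall_iff, Nat.lt_succ_iff, Int.cast_sum]

theorem sum_contrib_sub_contrib_pred (hL : IsDiffIneqAdd (ssAlpha n) L (ssBS n) (ssBT n s))
    {k : ℕ} (hk1 : 1 ≤ k) (hkn : k ≤ n) :
    ∑ i : Fin L.length, ((L.get i).contrib k - (L.get i).contrib (k - 1)) = s k := by
  obtain ⟨j, rfl⟩ := Nat.exists_eq_add_of_le' hk1
  rw [isDiffIneqAdd_ss_iff] at hL
  rw [Finset.sum_sub_distrib, hL _ hkn, Nat.cast_succ, add_sub_cancel_right, hL j (by omega),
    Finset.sum_range_succ _ (j + 1)]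
  ring

theorem exists_gapIdx_eq (hs : ∀ k, 1 ≤ k → k ≤ n → s k ≠ 0)
    (hL : IsDiffIneqAdd (ssAlpha n) L (ssBS n) (ssBT n s)) {k : ℕ} (hk1 : 1 ≤ k) (hkn : k ≤ n) :
    ∃ i : Fin L.length, (L.get i).gapIdx = k := by
  have hsk : (s k : ℝ) ≠ 0 := by exact_mod_cast hs k hk1 hkn
  obtain ⟨i, -, hi⟩ := Finset.exists_ne_zero_of_sum_ne_zero
    ((sum_contrib_sub_contrib_pred hL hk1 hkn).trans_ne hsk)
  rw [contrib_sub_contrib_pred] at hi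
  exact ⟨i, of_not_not fun h => hi (if_neg h)⟩

theorem Icc_subset_image_gapIdx (hs : ∀ k, 1 ≤ k → k ≤ n → s k ≠ 0)
    (hL : IsDiffIneqAdd (ssAlpha n) L (ssBS n) (ssBT n s)) :
    Finset.Icc 1 (n : ℤ) ⊆ Finset.univ.image fun i : Fin L.length => (L.get i).gapIdx := by
  intro k hk
  obtain ⟨hk1, hkn⟩ := Finset.mem_Icc.1 hk
  lift k to ℕ using by omega
  obtain ⟨i, hi⟩ := exists_gapIdx_eq hs hL (k := k) (by omega) (by omega)
  exact Finset.mem_image.2 ⟨i, Finset.mem_univ i, hi⟩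

theorem le_length_of_isDiffIneqAdd (hs : ∀ k, 1 ≤ k → k ≤ n → s k ≠ 0)
    (hL : IsDiffIneqAdd (ssAlpha n) L (ssBS n) (ssBT n s)) : n ≤ L.length := by
  simpa using (Finset.card_le_card (Icc_subset_image_gapIdx hs hL)).trans Finset.card_image_le

theorem injective_gapIdx_of_length_eq (hs : ∀ k, 1 ≤ k → k ≤ n → s k ≠ 0)
    (hL : IsDiffIneqAdd (ssAlpha n) L (ssBS n) (ssBT n s)) (hlen : L.length = n) :
    Function.Injective fun i : Fin L.length => (L.get i).gapIdx := by
  rw [← Set.injOn_univ, ← Finset.coe_univ, ← Finset.card_image_iff]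
  refine le_antisymm Finset.card_image_le ?_
  simpa [hlen] using Finset.card_le_card (Icc_subset_image_gapIdx hs hL)

def HasCanonicalGaps (n : ℕ) (s : ℕ → ℤ) (F : List OpIneqAdd) : Prop :=
  ∀ k, 1 ≤ k → k ≤ n →
    (∃! i : Fin F.length, IsGapOpAt k (F.get i)) ∧
    ∀ i : Fin F.length, IsGapOpAt k (F.get i) →
      F.get i = ⟨true, (k : ℝ) - 1, -(s k : ℝ)⟩ ∨ F.get i = ⟨false, (k : ℝ), (s k : ℝ)⟩

theorem hasCanonicalGaps_of_injective (hs : ∀ k, 1 ≤ k → k ≤ n → s k ≠ 0)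
    (hL : IsDiffIneqAdd (ssAlpha n) L (ssBS n) (ssBT n s)) (hnorm : ∀ f ∈ L, f.normalize = f)
    (hinj : Function.Injective fun i : Fin L.length => (L.get i).gapIdx) :
    HasCanonicalGaps n s L := by
  intro k hk1 hkn
  have hgap (i : Fin L.length) : IsGapOpAt k (L.get i) ↔ (L.get i).gapIdx = k := by
    rw [← isGapOpAt_normalize_iff, hnorm _ (L.get_mem i)]
  obtain ⟨i, hi⟩ := exists_gapIdx_eq hs hL hk1 hkn
  have huniq (j : Fin L.length) (hj : (L.get j).gapIdx = k) : j = i := hinj (hj.trans hi.symm)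
  have hjump : (L.get i).contrib k - (L.get i).contrib (k - 1) = s k := by
    rw [← sum_contrib_sub_contrib_pred hL hk1 hkn,
      Finset.sum_eq_single_of_mem i (Finset.mem_univ i)]
    intro j _ hji
    rw [contrib_sub_contrib_pred, if_neg (mt (huniq j) hji)]
  refine ⟨⟨i, (hgap i).2 hi, fun j hj => huniq j ((hgap j).1 hj)⟩, fun j hj => ?_⟩
  obtain rfl := huniq j ((hgap j).1 hj)
  rw [contrib_sub_contrib_pred, if_pos hi] at hjump
  rw [← hnorm _ (L.get_mem j)]
  exact normalize_eq_of_gapIdx_eq hi hjump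

theorem hasCanonicalGaps_map_normalize (hs : ∀ k, 1 ≤ k → k ≤ n → s k ≠ 0)
    (hL : IsDiffIneqAdd (ssAlpha n) L (ssBS n) (ssBT n s)) (hlen : L.length = n) :
    HasCanonicalGaps n s (L.map normalize) := by
  have hL' := isDiffIneqAdd_map_normalize hL
  refine hasCanonicalGaps_of_injective hs hL' (by simp) ?_
  exact injective_gapIdx_of_length_eq hs hL' (by rw [List.length_map, hlen])

noncomputable def prefixSumOps (n : ℕ) (s : ℕ → ℤ) : List OpIneqAdd :=
  List.ofFn fun m : Fin (n + 1) => ⟨false, ((m : ℕ) : ℝ), (s m : ℝ)⟩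

theorem length_prefixSumOps : (prefixSumOps n s).length = n + 1 := List.length_ofFn

theorem gapIdx_mk_falset_prefixSumOps (i : Fin (prefixSumOps n s).length) :
    ((prefixSumOps n s).get i).gapIdx = (i : ℕ) := by
  rw [List.get_eq_getElem]
  simp only [prefixSumOps, List.getElem_ofFn, gapIdx_mk_false]

theorem isDiffIneqAdd_prefixSumOps :
    IsDiffIneqAdd (ssAlpha n) (prefixSumOps n s) (ssBS n) (ssBT n s) := by
  rw [isDiffIneqAdd_ss_iff]
  intro v hv
  simp only [List.get_eq_getElem]
  rw [Fin.sum_univ_fun_getElem (prefixSumOps n s) (fun g => g.contrib v), prefixSumOps,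
    List.map_ofFn, List.sum_ofFn]
  simp only [Function.comp_apply, contrib_mk_false, Nat.cast_le]
  rw [Fin.sum_univ_eq_sum_range (fun m => if m ≤ v then (s m : ℝ) else 0), ← Finset.sum_filter]
  congr 1
  ext m
  simp only [Finset.mem_filter, Finset.mem_range]
  omega

theorem hasCanonicalGaps_prefixSumOps (hs : ∀ k, 1 ≤ k → k ≤ n → s k ≠ 0) :
    HasCanonicalGaps n s (prefixSumOps n s) := by
  refine hasCanonicalGaps_of_injective hs isDiffIneqAdd_prefixSumOps ?_ ?_
  · intro f hf
    obtain ⟨m, rfl⟩ := List.mem_ofFn.1 hf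
    exact normalize_mk_false _ _
  · intro i j hij
    simp only [gapIdx_mk_falset_prefixSumOps, Nat.cast_inj] at hij
    exact Fin.ext hij

end SubsetSum

theorem subsetSum_exists_canonical_best_diff_general (n : ℕ) (s : ℕ → ℤ)
    (hpos : ∀ i, 1 ≤ i → i ≤ n → 0 < s i) :
    ∃ F : List OpIneqAdd,
      IsBestDiffIneqAdd (ssAlpha n) F (ssBS n) (ssBT n s) ∧
      ∀ k, 1 ≤ k → k ≤ n →
        (∃! i : Fin F.length, IsGapOpAt k (F.get i)) ∧
        ∀ i : Fin F.length, IsGapOpAt k (F.get i) →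
          F.get i = ⟨true, (k : ℝ) - 1, -(s k : ℝ)⟩ ∨
          F.get i = ⟨false, (k : ℝ), (s k : ℝ)⟩ := by
  have hs k (hk1 : 1 ≤ k) (hkn : k ≤ n) : s k ≠ 0 := (hpos k hk1 hkn).ne'
  by_cases h : ∃ L, IsDiffIneqAdd (ssAlpha n) L (ssBS n) (ssBT n s) ∧ L.length = n
  · obtain ⟨L, hL, hlen⟩ := h
    refine ⟨L.map normalize, ⟨isDiffIneqAdd_map_normalize hL, fun L' hL' => ?_⟩,
      hasCanonicalGaps_map_normalize hs hL hlen⟩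
    rw [List.length_map, hlen]
    exact le_length_of_isDiffIneqAdd hs hL'
  · refine ⟨prefixSumOps n s, ⟨isDiffIneqAdd_prefixSumOps, fun L' hL' => ?_⟩,
      hasCanonicalGaps_prefixSumOps hs⟩
    have hne : L'.length ≠ n := fun he => h ⟨L', hL', he⟩
    have hle := le_length_of_isDiffIneqAdd hs hL'
    rw [length_prefixSumOps]
    omega

/-- For the SubsetSum instance, the set of diffs from `β_S` to `β_T` under `F(≤≥,+)`
contains a best diff `F` such that for every `k ∈ {1,…,n}`, `F` contains exactly one
gap operation at `k`, and this gap operation is either `(A ≤ k-1, B ← B - s k)` or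
`(A ≥ k, B ← B + s k)`. -/
theorem subsetSum_exists_canonical_best_diff (n : ℕ) (s : ℕ → ℤ) (t : ℤ)
    (ht : 0 < t) (hs0 : s 0 = -t) (hpos : ∀ i, 1 ≤ i → i ≤ n → 0 < s i) :
    ∃ F : List OpIneqAdd,
      IsBestDiffIneqAdd (ssAlpha n) F (ssBS n) (ssBT n s) ∧
      ∀ k, 1 ≤ k → k ≤ n →
        (∃! i : Fin F.length, IsGapOpAt k (F.get i)) ∧
        ∀ i : Fin F.length, IsGapOpAt k (F.get i) →
          F.get i = ⟨true, (k : ℝ) - 1, -(s k : ℝ)⟩ ∨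
          F.get i = ⟨false, (k : ℝ), (s k : ℝ)⟩ :=
  subsetSum_exists_canonical_best_diff_general n s hpos
end

section
/- For the SubsetSum instance, the best diffs from β_S to β_T under the family F(≤≥,←+) have cost n if and only if the best diffs from β_S to β_T under the family F(≤≥,+) have cost n. -/
open scoped Classical

/-- An operation of the family `F(≤≥,←+)`: if `dir = true` the condition is `A ≤ a`,
otherwise `A ≥ a`; if `assign = true` the modifier is the assignment `B ← b`, otherwise
it is the increment `B ← B + b`. -/
structure OpIneqMix where
  dir : Bool
  assign : Bool
  a : ℝ
  b : ℝ

/-- The condition of an operation of `F(≤≥,←+)`, evaluated on an `A`-value `v`. -/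
def OpIneqMix.cond (f : OpIneqMix) (v : ℤ) : Prop :=
  if f.dir then (v : ℝ) ≤ f.a else f.a ≤ (v : ℝ)

/-- Applying an operation of `F(≤≥,←+)`. -/
noncomputable def OpIneqMix.apply {K : Type*} (α : K → ℤ) (f : OpIneqMix) (β : K → ℝ) :
    K → ℝ :=
  fun k => if f.cond (α k) then (if f.assign then f.b else β k + f.b) else β k

/-- Successive application of a finite sequence of operations of `F(≤≥,←+)`. -/
noncomputable def applyOpsIneqMix {K : Type*} (α : K → ℤ) (L : List OpIneqMix) (β : K → ℝ) :
    K → ℝ :=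
  L.foldl (fun β' f => f.apply α β') β

/-- `L` is a diff from `βS` to `βT` under `F(≤≥,←+)`. -/
def IsDiffIneqMix {K : Type*} (α : K → ℤ) (L : List OpIneqMix) (βS βT : K → ℝ) : Prop :=
  applyOpsIneqMix α L βS = βT

/-- `L` is a best diff under `F(≤≥,←+)`. -/
def IsBestDiffIneqMix {K : Type*} (α : K → ℤ) (L : List OpIneqMix) (βS βT : K → ℝ) : Prop :=
  IsDiffIneqMix α L βS βT ∧
    ∀ L' : List OpIneqMix, IsDiffIneqMix α L' βS βT → L.length ≤ L'.length

/-! A single operation acts on a threshold region of the keys, i.e. a prefix or a suffix, so it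
creates at most one new jump (a position where `B` changes between consecutive keys). The target
of the SubsetSum instance has `n` jumps and the source none, so a diff of cost `n` creates a new
jump at every step. An assignment that does so cannot have destroyed any jump inside its region,
so `B` was already constant on that region and the assignment is an increment in disguise. -/

open Finset

variable {n : ℕ}

noncomputable def jumps {γ : Type*} (β : Fin (n + 1) → γ) : Finset (Fin n) :=
  {i | β i.castSucc ≠ β i.succ}

lemma mem_jumps {γ : Type*} {β : Fin (n + 1) → γ} {i : Fin n} :
    i ∈ jumps β ↔ β i.castSucc ≠ β i.succ := by
  simp [jumps]

lemma card_jumps_le_one {p : Fin (n + 1) → Prop} (hp : Monotone p ∨ Antitone p) :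
    #(jumps p) ≤ 1 := by
  refine card_le_one.2 fun i hi j hj => ?_
  simp only [mem_jumps, ne_eq, eq_iff_iff] at hi hj
  by_contra hne
  wlog hij : i < j generalizing i j
  · exact this j i hj hi (Ne.symm hne) (lt_of_le_of_ne (not_lt.1 hij) (Ne.symm hne))
  have hi' := Fin.castSucc_le_succ i
  have hj' := Fin.castSucc_le_succ j
  have hij' := Fin.succ_le_castSucc_iff.2 hij
  rcases hp with hp | hp <;>
    have := hp hi' <;> have := hp hj' <;> have := hp hij' <;> tauto

lemma exists_forall_eq_of_monotone_or_antitone {γ : Type*} {p : Fin (n + 1) → Prop}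
    (hp : Monotone p ∨ Antitone p) {β : Fin (n + 1) → γ}
    (hβ : ∀ i : Fin n, p i.castSucc → p i.succ → β i.castSucc = β i.succ) :
    ∃ c, ∀ k, p k → β k = c := by
  rcases hp with hp | hp
  · refine ⟨β (Fin.last n), Fin.reverseInduction (fun _ => rfl) fun i ih hi => ?_⟩
    have hi' : p i.succ := hp (Fin.castSucc_le_succ i) hi
    exact (hβ i hi hi').trans (ih hi')
  · refine ⟨β 0, Fin.induction (fun _ => rfl) fun i ih hi => ?_⟩
    have hi' : p i.castSucc := hp (Fin.castSucc_le_succ i) hi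
    exact (hβ i hi' hi).symm.trans (ih hi')

section Operations

variable {α : Fin (n + 1) → ℤ} {β : Fin (n + 1) → ℝ}

lemma OpIneqMix.monotone_or_antitone_cond (hα : Monotone α) (f : OpIneqMix) :
    Monotone (fun k => f.cond (α k)) ∨ Antitone (fun k => f.cond (α k)) := by
  cases hdir : f.dir
  · refine Or.inl fun k k' hk h => ?_
    simp only [OpIneqMix.cond, hdir] at h ⊢
    exact h.trans (by exact_mod_cast hα hk)
  · refine Or.inr fun k k' hk h => ?_
    simp only [OpIneqMix.cond, hdir] at h ⊢
    exact (by exact_mod_cast hα hk : ((α k : ℤ) : ℝ) ≤ α k').trans h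

lemma OpIneqMix.mem_jumps_of_mem_jumps_apply (f : OpIneqMix) {j : Fin n}
    (hj : j ∈ jumps (f.apply α β)) (hf : j ∉ jumps fun k => f.cond (α k)) :
    j ∈ jumps β ∧ ¬(f.assign ∧ f.cond (α j.castSucc)) := by
  simp only [mem_jumps, ne_eq, eq_iff_iff, not_not] at hj hf ⊢
  by_cases hc : f.cond (α j.castSucc) <;> cases hA : f.assign <;>
    simp_all [OpIneqMix.apply]

lemma OpIneqMix.card_jumps_apply_le (hα : Monotone α) (f : OpIneqMix) (β : Fin (n + 1) → ℝ) :
    #(jumps (f.apply α β)) ≤ #(jumps β) + 1 := by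
  have hsub : jumps (f.apply α β) \ jumps β ⊆ jumps fun k => f.cond (α k) := fun j hj => by
    by_contra hf
    exact (mem_sdiff.1 hj).2 (f.mem_jumps_of_mem_jumps_apply (mem_sdiff.1 hj).1 hf).1
  calc #(jumps (f.apply α β)) ≤ #(jumps (f.apply α β) \ jumps β) + #(jumps β) :=
        card_le_card_sdiff_add_card
    _ ≤ 1 + #(jumps β) := by
        gcongr
        exact (card_le_card hsub).trans (card_jumps_le_one (f.monotone_or_antitone_cond hα))
    _ = #(jumps β) + 1 := add_comm _ _

/-- The jump at `i` is erased, which pays for the at most one jump the operation creates. -/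
lemma OpIneqMix.card_jumps_apply_le_of_assign (hα : Monotone α) (f : OpIneqMix)
    (hA : f.assign) {i : Fin n} (hi : i ∈ jumps β) (hfi : f.cond (α i.castSucc)) :
    #(jumps (f.apply α β)) ≤ #(jumps β) := by
  have hsub : jumps (f.apply α β) \ (jumps β).erase i ⊆ jumps fun k => f.cond (α k) :=
    fun j hj => by
      by_contra hf
      obtain ⟨hjβ, hjA⟩ := f.mem_jumps_of_mem_jumps_apply (mem_sdiff.1 hj).1 hf
      have hji : j ≠ i := by rintro rfl; exact hjA ⟨hA, hfi⟩
      exact (mem_sdiff.1 hj).2 (mem_erase.2 ⟨hji, hjβ⟩)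
  have hpos : 0 < #(jumps β) := card_pos.2 ⟨i, hi⟩
  calc #(jumps (f.apply α β))
        ≤ #(jumps (f.apply α β) \ (jumps β).erase i) + #((jumps β).erase i) :=
          card_le_card_sdiff_add_card
    _ ≤ 1 + (#(jumps β) - 1) := by
        gcongr
        · exact (card_le_card hsub).trans (card_jumps_le_one (f.monotone_or_antitone_cond hα))
        · exact (card_erase_of_mem hi).le
    _ = #(jumps β) := by omega

lemma OpIneqMix.exists_apply_eq_of_card_jumps_apply (hα : Monotone α) (f : OpIneqMix)
    (β : Fin (n + 1) → ℝ) (h : #(jumps (f.apply α β)) = #(jumps β) + 1) :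
    ∃ g : OpIneqAdd, g.apply α β = f.apply α β := by
  have hcond : ∀ b, (⟨f.dir, f.a, b⟩ : OpIneqAdd).cond = f.cond := fun _ => rfl
  cases hA : f.assign
  · refine ⟨⟨f.dir, f.a, f.b⟩, funext fun k => ?_⟩
    simp [OpIneqAdd.apply, OpIneqMix.apply, hcond, hA]
  · have hflat : ∀ i : Fin n, f.cond (α i.castSucc) → β i.castSucc = β i.succ := by
      intro i hi
      by_contra hne
      have := f.card_jumps_apply_le_of_assign hα hA (mem_jumps.2 hne) hi
      omega
    obtain ⟨c, hc⟩ := exists_forall_eq_of_monotone_or_antitone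
      (f.monotone_or_antitone_cond hα) fun i hi _ => hflat i hi
    refine ⟨⟨f.dir, f.a, f.b - c⟩, funext fun k => ?_⟩
    by_cases hk : f.cond (α k)
    · simp [OpIneqAdd.apply, OpIneqMix.apply, hcond, hA, hk, hc k hk]
    · simp [OpIneqAdd.apply, OpIneqMix.apply, hcond, hk]

lemma card_jumps_applyOpsIneqMix_le (hα : Monotone α) (L : List OpIneqMix)
    (β : Fin (n + 1) → ℝ) :
    #(jumps (applyOpsIneqMix α L β)) ≤ #(jumps β) + L.length := by
  induction L generalizing β with
  | nil => simp [applyOpsIneqMix]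
  | cons f L ih =>
    calc #(jumps (applyOpsIneqMix α L (f.apply α β)))
        ≤ #(jumps (f.apply α β)) + L.length := ih _
      _ ≤ #(jumps β) + 1 + L.length := by gcongr; exact f.card_jumps_apply_le hα β
      _ = #(jumps β) + (f :: L).length := by rw [List.length_cons, add_assoc, add_comm 1]

lemma exists_applyOpsIneqAdd_eq_of_card_jumps (hα : Monotone α) (L : List OpIneqMix)
    (β : Fin (n + 1) → ℝ) (h : #(jumps (applyOpsIneqMix α L β)) = #(jumps β) + L.length) :
    ∃ L' : List OpIneqAdd, L'.length = L.length ∧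
      applyOpsIneqAdd α L' β = applyOpsIneqMix α L β := by
  induction L generalizing β with
  | nil => exact ⟨[], rfl, rfl⟩
  | cons f L ih =>
    change #(jumps (applyOpsIneqMix α L (f.apply α β))) = #(jumps β) + (L.length + 1) at h
    have hrest := card_jumps_applyOpsIneqMix_le hα L (f.apply α β)
    have hstep := f.card_jumps_apply_le hα β
    obtain ⟨g, hg⟩ := f.exists_apply_eq_of_card_jumps_apply hα β (by omega)
    obtain ⟨L', hlen, hL'⟩ := ih (f.apply α β) (by omega)
    refine ⟨g :: L', by simp [hlen], ?_⟩
    change applyOpsIneqAdd α L' (g.apply α β) = applyOpsIneqMix α L (f.apply α β)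
    rw [hg, hL']

def OpIneqAdd.toMix (g : OpIneqAdd) : OpIneqMix := ⟨g.dir, false, g.a, g.b⟩

lemma applyOpsIneqMix_map_toMix (L : List OpIneqAdd) (β : Fin (n + 1) → ℝ) :
    applyOpsIneqMix α (L.map OpIneqAdd.toMix) β = applyOpsIneqAdd α L β := by
  induction L generalizing β with
  | nil => rfl
  | cons g L ih =>
    have hg : g.toMix.apply α β = g.apply α β := by
      funext k
      simp only [OpIneqMix.apply, OpIneqAdd.apply, OpIneqAdd.toMix, Bool.false_eq_true, if_false]
      rfl
    exact (congrArg _ hg).trans (ih _)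

end Operations

theorem exists_isBestDiffIneqMix_iff {α : Fin (n + 1) → ℤ} (hα : Monotone α)
    {βS βT : Fin (n + 1) → ℝ} {m : ℕ} (hm : #(jumps βT) = #(jumps βS) + m) :
    (∃ F : List OpIneqMix, IsBestDiffIneqMix α F βS βT ∧ F.length = m) ↔
      ∃ F : List OpIneqAdd, IsBestDiffIneqAdd α F βS βT ∧ F.length = m := by
  have hMix (L : List OpIneqMix) (hL : IsDiffIneqMix α L βS βT) : m ≤ L.length := by
    have := card_jumps_applyOpsIneqMix_le hα L βS
    rw [hL] at this
    omega
  have hAdd (L : List OpIneqAdd) (hL : IsDiffIneqAdd α L βS βT) : m ≤ L.length := by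
    simpa using hMix _ ((applyOpsIneqMix_map_toMix L βS).trans hL)
  constructor
  · rintro ⟨F, ⟨hF, -⟩, rfl⟩
    obtain ⟨L, hlen, hL⟩ := exists_applyOpsIneqAdd_eq_of_card_jumps hα F βS (by rw [hF, hm])
    exact ⟨L, ⟨hL.trans hF, fun L' hL' => hlen ▸ hAdd L' hL'⟩, hlen⟩
  · rintro ⟨F, ⟨hF, -⟩, rfl⟩
    refine ⟨F.map OpIneqAdd.toMix, ⟨?_, fun L' hL' => ?_⟩, F.length_map _⟩
    · exact (applyOpsIneqMix_map_toMix F βS).trans hF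
    · simpa using hMix L' hL'

lemma monotone_ssAlpha : Monotone (ssAlpha n) :=
  fun _ _ h => Int.ofNat_le.2 h

lemma jumps_ssBS : jumps (ssBS n) = ∅ := by
  simp [jumps, ssBS]

lemma jumps_ssBT {s : ℕ → ℤ} (hpos : ∀ i, 1 ≤ i → i ≤ n → 0 < s i) :
    jumps (ssBT n s) = univ := by
  refine eq_univ_of_forall fun i => mem_jumps.2 fun h => ?_
  simp only [ssBT, Fin.val_castSucc, Fin.val_succ] at h
  have hsum : ∑ ℓ ∈ range (i + 1), s ℓ = ∑ ℓ ∈ range (i + 1 + 1), s ℓ := by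
    exact_mod_cast h
  rw [sum_range_succ _ (i + 1)] at hsum
  have := hpos (i + 1) (by omega) i.isLt
  omega

theorem subsetSum_mix_best_cost_iff_add_best_cost_general (n : ℕ) (s : ℕ → ℤ)
    (hpos : ∀ i, 1 ≤ i → i ≤ n → 0 < s i) :
    (∃ F : List OpIneqMix,
        IsBestDiffIneqMix (ssAlpha n) F (ssBS n) (ssBT n s) ∧ F.length = n) ↔
      ∃ F : List OpIneqAdd,
        IsBestDiffIneqAdd (ssAlpha n) F (ssBS n) (ssBT n s) ∧ F.length = n :=
  exists_isBestDiffIneqMix_iff monotone_ssAlpha <| by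
    simp [jumps_ssBS, jumps_ssBT hpos]

/-- For the SubsetSum instance, the best diffs from `β_S` to `β_T` under `F(≤≥,←+)` have
cost `n` if and only if the best diffs from `β_S` to `β_T` under `F(≤≥,+)` have cost `n`. -/
theorem subsetSum_mix_best_cost_iff_add_best_cost (n : ℕ) (s : ℕ → ℤ) (t : ℤ)
    (ht : 0 < t) (hs0 : s 0 = -t) (hpos : ∀ i, 1 ≤ i → i ≤ n → 0 < s i) :
    (∃ F : List OpIneqMix,
        IsBestDiffIneqMix (ssAlpha n) F (ssBS n) (ssBT n s) ∧ F.length = n) ↔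
      ∃ F : List OpIneqAdd,
        IsBestDiffIneqAdd (ssAlpha n) F (ssBS n) (ssBT n s) ∧ F.length = n :=
  subsetSum_mix_best_cost_iff_add_best_cost_general n s hpos
end

section
/- Let K = {0,…,n} with A-values α(k) = k. If β : K → ℝ is obtained from the identically-zero B-value function by successively applying m operations of the family F(R,+), then the jump of β is at most m, where the jump of β is the number of indices i ∈ {1,…,n} with β(i−1) < β(i). Moreover, applying a single operation of F(R,+) to any β increases its jump by at most one. -/
open scoped Classical

/-- An operation of the family `F(R,+)`: reals `a ≤ z` and an increment `b`, with condition
`A ∈ [a, z]` and modifier `B ← B + b`. -/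
structure OpRangeAdd where
  a : ℝ
  z : ℝ
  hle : a ≤ z
  b : ℝ

/-- The condition of an operation of `F(R,+)`, evaluated on an `A`-value `v`. -/
def OpRangeAdd.cond (f : OpRangeAdd) (v : ℤ) : Prop :=
  f.a ≤ (v : ℝ) ∧ (v : ℝ) ≤ f.z

/-- Applying an operation of `F(R,+)`: every key whose `A`-value lies in `[a, z]` gets its
`B`-value incremented by `b`; other keys are unchanged. -/
noncomputable def OpRangeAdd.apply {K : Type*} (α : K → ℤ) (f : OpRangeAdd) (β : K → ℝ) :
    K → ℝ :=
  fun k => if f.cond (α k) then β k + f.b else β k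

/-- Successive application of a finite sequence of operations of `F(R,+)`. -/
noncomputable def applyOpsRangeAdd {K : Type*} (α : K → ℤ) (L : List OpRangeAdd)
    (β : K → ℝ) : K → ℝ :=
  L.foldl (fun β' f => f.apply α β') β

/-- `L` is a diff from `βS` to `βT` under `F(R,+)`. -/
def IsDiffRangeAdd {K : Type*} (α : K → ℤ) (L : List OpRangeAdd) (βS βT : K → ℝ) : Prop :=
  applyOpsRangeAdd α L βS = βT

/-- `L` is a best diff under `F(R,+)`: a diff of minimum cost (number of operations). -/
def IsBestDiffRangeAdd {K : Type*} (α : K → ℤ) (L : List OpRangeAdd) (βS βT : K → ℝ) :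
    Prop :=
  IsDiffRangeAdd α L βS βT ∧
    ∀ L' : List OpRangeAdd, IsDiffRangeAdd α L' βS βT → L.length ≤ L'.length

/-- The jump of `β : {0,…,n} → ℝ`: the number of indices `i ∈ {1,…,n}` with
`β (i-1) < β i`. -/
noncomputable def jump (n : ℕ) (β : Fin (n + 1) → ℝ) : ℕ :=
  (Finset.univ.filter fun i : Fin n => β i.castSucc < β i.succ).card

lemma jump_apply_le (n : ℕ) (β : Fin (n + 1) → ℝ) (f : OpRangeAdd) :
    jump n (f.apply (fun k : Fin (n + 1) => ((k : ℕ) : ℤ)) β) ≤ jump n β + 1 := by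
  classical
  set α : Fin (n+1) → ℤ := fun k => ((k : ℕ) : ℤ) with hα
  set S' := Finset.univ.filter
    (fun i : Fin n => f.apply α β i.castSucc < f.apply α β i.succ) with hS'
  set S := Finset.univ.filter (fun i : Fin n => β i.castSucc < β i.succ) with hS
  have hchar : ∀ i ∈ S' \ S,
      (0 < f.b → ((i : ℕ) : ℝ) < f.a ∧ f.a ≤ ((i : ℕ) : ℝ) + 1) ∧
      (f.b ≤ 0 → ((i : ℕ) : ℝ) ≤ f.z ∧ f.z < ((i : ℕ) : ℝ) + 1) := by
    intro i hi
    rw [Finset.mem_sdiff, hS', hS, Finset.mem_filter, Finset.mem_filter] at hi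
    obtain ⟨⟨-, h1⟩, h2⟩ := hi
    have h2' : ¬ (β i.castSucc < β i.succ) := fun h => h2 ⟨Finset.mem_univ i, h⟩
    have hv1 : α i.castSucc = ((i : ℕ) : ℤ) := by simp [hα]
    have hv2 : α i.succ = ((i : ℕ) : ℤ) + 1 := by simp [hα]
    by_cases hc1 : f.cond (α i.castSucc) <;> by_cases hc2 : f.cond (α i.succ) <;>
      simp only [OpRangeAdd.apply, hc1, hc2, if_true, if_false, if_pos, if_neg,
        not_false_iff] at h1
    · exact absurd (by linarith) h2'
    · -- c1 true, c2 false : exit; requires b ≤ 0 to create new jump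
      rw [hv1] at hc1
      rw [hv2] at hc2
      simp only [OpRangeAdd.cond] at hc1 hc2
      push_cast at hc1 hc2
      obtain ⟨ha1, hz1⟩ := hc1
      constructor
      · intro hb; exact absurd (by linarith) h2'
      · intro hb
        refine ⟨hz1, ?_⟩
        by_contra hzz
        push_neg at hzz
        exact hc2 ⟨by linarith, hzz⟩
    · -- c1 false, c2 true : entry; requires 0 < b
      rw [hv1] at hc1
      rw [hv2] at hc2
      simp only [OpRangeAdd.cond] at hc1 hc2
      push_cast at hc1 hc2
      obtain ⟨ha2, hz2⟩ := hc2
      constructor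
      · intro hb
        refine ⟨?_, ha2⟩
        by_contra haa
        push_neg at haa
        exact hc1 ⟨haa, by linarith⟩
      · intro hb; exact absurd (by linarith) h2'
    · exact absurd h1 h2'
  have hcard : (S' \ S).card ≤ 1 := by
    rw [Finset.card_le_one]
    intro i hi j hj
    obtain ⟨hip, hin⟩ := hchar i hi
    obtain ⟨hjp, hjn⟩ := hchar j hj
    rcases lt_or_ge 0 f.b with hb | hb
    · obtain ⟨h1, h2⟩ := hip hb
      obtain ⟨h3, h4⟩ := hjp hb
      have : ((i:ℕ):ℝ) < ((j:ℕ):ℝ) + 1 := lt_of_lt_of_le h1 h4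
      have h5 : (i:ℕ) ≤ (j:ℕ) := by exact_mod_cast Nat.lt_succ_iff.mp (by exact_mod_cast this)
      have : ((j:ℕ):ℝ) < ((i:ℕ):ℝ) + 1 := lt_of_lt_of_le h3 h2
      have h6 : (j:ℕ) ≤ (i:ℕ) := by exact_mod_cast Nat.lt_succ_iff.mp (by exact_mod_cast this)
      exact Fin.ext (le_antisymm h5 h6)
    · obtain ⟨h1, h2⟩ := hin hb
      obtain ⟨h3, h4⟩ := hjn hb
      have : ((i:ℕ):ℝ) < ((j:ℕ):ℝ) + 1 := lt_of_le_of_lt h1 h4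
      have h5 : (i:ℕ) ≤ (j:ℕ) := by exact_mod_cast Nat.lt_succ_iff.mp (by exact_mod_cast this)
      have : ((j:ℕ):ℝ) < ((i:ℕ):ℝ) + 1 := lt_of_le_of_lt h3 h2
      have h6 : (j:ℕ) ≤ (i:ℕ) := by exact_mod_cast Nat.lt_succ_iff.mp (by exact_mod_cast this)
      exact Fin.ext (le_antisymm h5 h6)
  calc S'.card ≤ (S' \ S).card + S.card := Finset.card_le_card_sdiff_add_card
    _ ≤ S.card + 1 := by omega

lemma jump_applyOps_le (n : ℕ) :
    ∀ (L : List OpRangeAdd) (β : Fin (n + 1) → ℝ),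
      jump n (applyOpsRangeAdd (fun k : Fin (n + 1) => ((k : ℕ) : ℤ)) L β)
        ≤ jump n β + L.length := by
  intro L
  induction L with
  | nil => intro β; simp [applyOpsRangeAdd]
  | cons f L ih =>
    intro β
    have h1 : applyOpsRangeAdd (fun k : Fin (n + 1) => ((k : ℕ) : ℤ)) (f :: L) β
        = applyOpsRangeAdd (fun k : Fin (n + 1) => ((k : ℕ) : ℤ)) L
            (f.apply (fun k : Fin (n + 1) => ((k : ℕ) : ℤ)) β) := rfl
    rw [h1]
    calc _ ≤ jump n (f.apply (fun k : Fin (n + 1) => ((k : ℕ) : ℤ)) β) + L.length := ih _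
      _ ≤ (jump n β + 1) + L.length := by
          have := jump_apply_le n β f
          omega
      _ = jump n β + (f :: L).length := by simp; omega

/-- On the key set `K = {0,…,n}` with `A`-values `α k = k`: applying `m` operations of
`F(R,+)` to the identically-zero `B`-value function yields a function of jump at most `m`;
moreover, applying a single operation of `F(R,+)` to any `β` increases its jump by at
most one. -/
theorem jump_le_of_applyOps (n : ℕ) :
    (∀ L : List OpRangeAdd,
        jump n (applyOpsRangeAdd (fun k : Fin (n + 1) => ((k : ℕ) : ℤ)) L fun _ => 0)
          ≤ L.length) ∧
      ∀ (β : Fin (n + 1) → ℝ) (f : OpRangeAdd),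
        jump n (f.apply (fun k : Fin (n + 1) => ((k : ℕ) : ℤ)) β) ≤ jump n β + 1 := by
  constructor
  · intro L
    have h := jump_applyOps_le n L (fun _ => 0)
    have hz : jump n (fun _ : Fin (n+1) => (0:ℝ)) = 0 := by simp [jump]
    omega
  · intro β f
    exact jump_apply_le n β f
end

section
/- For the SubsetSum instance, every diff from β_S to β_T under the family F(R,+) has cost at least n; in particular every best diff has cost at least n. -/
open scoped Classical

/-!
An operation of `F(R,+)` can change the jump `β v - β (v - 1)` between consecutive `A`-values
only at `v = ⌈a⌉` (by `b`) and at `v = ⌊z⌋ + 1` (by `-b`). As `b` and `-b` are not both positive,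
each operation raises at most one jump. Going from `β_S ≡ 0` to `β_T` raises the jump at each
`k = 1, …, n` by `s k > 0`, so a diff contains `n` distinct operations.
-/

namespace OpRangeAdd

noncomputable def increment (f : OpRangeAdd) (v : ℤ) : ℝ :=
  if f.cond v then f.b else 0

noncomputable def jump (f : OpRangeAdd) (v : ℤ) : ℝ :=
  f.increment v - f.increment (v - 1)

theorem jump_pos_cases {f : OpRangeAdd} {v : ℤ} (h : 0 < f.jump v) :
    (0 < f.b ∧ ⌈f.a⌉ = v) ∨ (f.b < 0 ∧ ⌊f.z⌋ + 1 = v) := by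
  have hle := f.hle
  rw [← eq_sub_iff_add_eq, Int.ceil_eq_iff, Int.floor_eq_iff]
  unfold jump increment at h
  split_ifs at h with hv hv' hv'
  all_goals simp only [cond, Int.cast_sub, Int.cast_one, not_and_or, not_le] at *
  · linarith
  · exact .inl ⟨by linarith, hv'.resolve_right (by linarith), hv.1⟩
  · exact .inr ⟨by linarith, hv'.2, by linarith [hv.resolve_left (by linarith)]⟩
  · linarith

theorem eq_of_jump_pos {f : OpRangeAdd} {v w : ℤ} (hv : 0 < f.jump v) (hw : 0 < f.jump w) :
    v = w := by
  rcases jump_pos_cases hv with ⟨hb, rfl⟩ | ⟨hb, rfl⟩ <;>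
    rcases jump_pos_cases hw with ⟨hb', rfl⟩ | ⟨hb', rfl⟩ <;>
    first | rfl | (exfalso; linarith)

end OpRangeAdd

theorem applyOpsRangeAdd_apply {K : Type*} (α : K → ℤ) (L : List OpRangeAdd) (β : K → ℝ)
    (k : K) :
    applyOpsRangeAdd α L β k = β k + (L.map (·.increment (α k))).sum := by
  induction L generalizing β with
  | nil => simp [applyOpsRangeAdd]
  | cons f L ih =>
    simp only [applyOpsRangeAdd, List.foldl_cons] at ih ⊢
    rw [ih, OpRangeAdd.apply, List.map_cons, List.sum_cons, OpRangeAdd.increment]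
    split_ifs <;> ring

theorem List.card_le_length_of_forall_exists_mem {α ι : Type*} [Fintype ι] {L : List α}
    {P : α → ι → Prop} (hcover : ∀ i, ∃ f ∈ L, P f i)
    (hunique : ∀ f i j, P f i → P f j → i = j) :
    Fintype.card ι ≤ L.length := by
  classical
  choose g hgL hgP using hcover
  calc Fintype.card ι ≤ L.toFinset.card :=
        Finset.card_le_card_of_injOn g (fun i _ => List.mem_toFinset.2 (hgL i))
          (fun i _ j _ hij => hunique _ _ _ (hgP i) (hij ▸ hgP j))
    _ ≤ L.length := L.toFinset_card_le

theorem IsDiffRangeAdd.sub_eq_sum_jump {K : Type*} {α : K → ℤ} {L : List OpRangeAdd}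
    {βS βT : K → ℝ} (hL : IsDiffRangeAdd α L βS βT) {k k' : K} (hk : α k' = α k - 1) :
    βT k - βT k' = βS k - βS k' + (L.map (·.jump (α k))).sum := by
  rw [← hL, applyOpsRangeAdd_apply, applyOpsRangeAdd_apply, hk]
  simp only [OpRangeAdd.jump]
  rw [L.sum_hom₂ (· - ·) (fun _ _ _ _ => add_sub_add_comm _ _ _ _) (sub_zero 0)]
  ring

theorem IsDiffRangeAdd.card_le_length {K ι : Type*} [Fintype ι] {α : K → ℤ}
    {L : List OpRangeAdd} {βS βT : K → ℝ} (hL : IsDiffRangeAdd α L βS βT) (lo hi : ι → K)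
    (hstep : ∀ i, α (lo i) = α (hi i) - 1) (hinj : Function.Injective (α ∘ hi))
    (hgap : ∀ i, βS (hi i) - βS (lo i) < βT (hi i) - βT (lo i)) :
    Fintype.card ι ≤ L.length := by
  refine List.card_le_length_of_forall_exists_mem (P := fun f i => 0 < f.jump (α (hi i)))
    (fun i => ?_) (fun f i j hi hj => hinj (OpRangeAdd.eq_of_jump_pos hi hj))
  have hsum : 0 < (L.map (·.jump (α (hi i)))).sum := by
    linarith [hgap i, hL.sub_eq_sum_jump (hstep i)]
  exact List.exists_lt_of_sum_lt (f := fun _ => 0) _ (by simpa using hsum)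

theorem subsetSum_range_diff_cost_lower_bound_general (n : ℕ) (s : ℕ → ℤ)
    (hpos : ∀ i, 1 ≤ i → i ≤ n → 0 < s i) :
    (∀ L : List OpRangeAdd,
        IsDiffRangeAdd (ssAlpha n) L (ssBS n) (ssBT n s) → n ≤ L.length) ∧
      ∀ L : List OpRangeAdd,
        IsBestDiffRangeAdd (ssAlpha n) L (ssBS n) (ssBT n s) → n ≤ L.length := by
  have hdiff (L : List OpRangeAdd) (hL : IsDiffRangeAdd (ssAlpha n) L (ssBS n) (ssBT n s)) :
      n ≤ L.length := by
    simpa using hL.card_le_length Fin.castSucc Fin.succ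
      (fun i => by simp [ssAlpha])
      (fun i j h => Fin.succ_injective _ (Fin.ext (by simpa [ssAlpha] using h)))
      (fun i => by
        simp only [ssBS, ssBT, Fin.val_succ, Fin.val_castSucc, Finset.sum_range_succ _ (i + 1)]
        push_cast
        linarith [(Int.cast_pos (R := ℝ)).2 (hpos (i + 1) (by omega) (by omega))])
  exact ⟨hdiff, fun L hL => hdiff L hL.1⟩

/-- For the SubsetSum instance, every diff from `β_S` to `β_T` under `F(R,+)` has cost at
least `n`; in particular every best diff has cost at least `n`. -/
theorem subsetSum_range_diff_cost_lower_bound (n : ℕ) (s : ℕ → ℤ) (t : ℤ)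
    (ht : 0 < t) (hs0 : s 0 = -t) (hpos : ∀ i, 1 ≤ i → i ≤ n → 0 < s i) :
    (∀ L : List OpRangeAdd,
        IsDiffRangeAdd (ssAlpha n) L (ssBS n) (ssBT n s) → n ≤ L.length) ∧
      ∀ L : List OpRangeAdd,
        IsBestDiffRangeAdd (ssAlpha n) L (ssBS n) (ssBT n s) → n ≤ L.length :=
  subsetSum_range_diff_cost_lower_bound_general n s hpos
end

section
/- For the SubsetSum instance, the set of diffs from β_S to β_T under F(R,+) contains a bounded best diff, i.e., a best diff F = (f'_1,…,f'_m) in which every operation f'_i has condition A ∈ [a'_i, z'_i] with a'_i and z'_i integers in {0,…,n}. -/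
open scoped Classical

/-- Pointwise formula for applying a list of operations. -/
lemma applyOps_point {K : Type*} (α : K → ℤ) (L : List OpRangeAdd) (β : K → ℝ) (k : K) :
    applyOpsRangeAdd α L β k =
      β k + (L.map (fun f => if f.cond (α k) then f.b else 0)).sum := by
  induction L generalizing β with
  | nil => simp [applyOpsRangeAdd]
  | cons f L ih =>
      have h : applyOpsRangeAdd α (f :: L) β = applyOpsRangeAdd α L (f.apply α β) := rfl
      rw [h, ih]
      simp only [OpRangeAdd.apply, List.map_cons, List.sum_cons]
      split <;> ring

/-- Any operation can be replaced by one with integer endpoints in `[0, n]`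
without changing its action on the SubsetSum keys. -/
lemma roundOp (n : ℕ) (f : OpRangeAdd) :
    ∃ f' : OpRangeAdd,
      (∃ a' z' : ℤ, 0 ≤ a' ∧ a' ≤ (n : ℤ) ∧ 0 ≤ z' ∧ z' ≤ (n : ℤ) ∧
        f'.a = (a' : ℝ) ∧ f'.z = (z' : ℝ)) ∧
      ∀ β : Fin (n + 1) → ℝ, f'.apply (ssAlpha n) β = f.apply (ssAlpha n) β := by
  by_cases h : ∃ k : Fin (n + 1), f.cond (ssAlpha n k)
  · obtain ⟨k, hk⟩ := h
    set a' : ℤ := max 0 ⌈f.a⌉ with ha'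
    set z' : ℤ := min (n : ℤ) ⌊f.z⌋ with hz'
    have hk0 : (0 : ℤ) ≤ ((k : ℕ) : ℤ) := Int.ofNat_nonneg _
    have hkn : ((k : ℕ) : ℤ) ≤ (n : ℤ) := by exact_mod_cast Nat.le_of_lt_succ k.isLt
    have hak : a' ≤ ((k : ℕ) : ℤ) := max_le hk0 (Int.ceil_le.mpr hk.1)
    have hkz : ((k : ℕ) : ℤ) ≤ z' := le_min hkn (Int.le_floor.mpr hk.2)
    have hle : ((a' : ℝ)) ≤ (z' : ℝ) := by exact_mod_cast hak.trans hkz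
    refine ⟨⟨(a' : ℝ), (z' : ℝ), hle, f.b⟩,
      ⟨a', z', le_max_left _ _, hak.trans hkn, hk0.trans hkz, min_le_left _ _, rfl, rfl⟩, ?_⟩
    intro β
    funext j
    have hj0 : (0 : ℤ) ≤ ((j : ℕ) : ℤ) := Int.ofNat_nonneg _
    have hjn : ((j : ℕ) : ℤ) ≤ (n : ℤ) := by exact_mod_cast Nat.le_of_lt_succ j.isLt
    have hcond : (OpRangeAdd.mk (a' : ℝ) (z' : ℝ) hle f.b).cond (ssAlpha n j) ↔
        f.cond (ssAlpha n j) := by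
      unfold OpRangeAdd.cond ssAlpha
      dsimp only
      constructor
      · rintro ⟨h1, h2⟩
        have h1' : a' ≤ ((j : ℕ) : ℤ) := by exact_mod_cast h1
        have h2' : ((j : ℕ) : ℤ) ≤ z' := by exact_mod_cast h2
        exact ⟨Int.ceil_le.mp (le_trans (le_max_right _ _) h1'),
               Int.le_floor.mp (h2'.trans (min_le_right _ _))⟩
      · rintro ⟨h1, h2⟩
        have hA : a' ≤ ((j : ℕ) : ℤ) := max_le hj0 (Int.ceil_le.mpr h1)
        have hZ : ((j : ℕ) : ℤ) ≤ z' := le_min hjn (Int.le_floor.mpr h2)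
        exact ⟨by exact_mod_cast hA, by exact_mod_cast hZ⟩
    simp only [OpRangeAdd.apply]
    by_cases hc : f.cond (ssAlpha n j)
    · rw [if_pos (hcond.mpr hc), if_pos hc]
    · rw [if_neg (fun hx => hc (hcond.mp hx)), if_neg hc]
  · refine ⟨⟨(0 : ℝ), (0 : ℝ), le_refl _, 0⟩,
      ⟨0, 0, le_refl _, by exact_mod_cast Nat.zero_le n, le_refl _,
        by exact_mod_cast Nat.zero_le n, by norm_num, by norm_num⟩, ?_⟩
    intro β
    funext j
    simp only [OpRangeAdd.apply]
    rw [if_neg (fun hc => h ⟨j, hc⟩)]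
    split <;> simp

/-- Rounding a whole list of operations. -/
lemma roundList (n : ℕ) (L : List OpRangeAdd) :
    ∃ L' : List OpRangeAdd, L'.length = L.length ∧
      (∀ β, applyOpsRangeAdd (ssAlpha n) L' β = applyOpsRangeAdd (ssAlpha n) L β) ∧
      ∀ f ∈ L', ∃ a' z' : ℤ, 0 ≤ a' ∧ a' ≤ (n : ℤ) ∧ 0 ≤ z' ∧ z' ≤ (n : ℤ) ∧
        f.a = (a' : ℝ) ∧ f.z = (z' : ℝ) := by
  induction L with
  | nil => exact ⟨[], rfl, fun β => rfl, by simp⟩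
  | cons f L ih =>
      obtain ⟨L', hlen, happ, hbd⟩ := ih
      obtain ⟨f', hfb, hfa⟩ := roundOp n f
      refine ⟨f' :: L', by simp [hlen], ?_, ?_⟩
      · intro β
        show applyOpsRangeAdd _ L' (f'.apply _ β) = applyOpsRangeAdd _ L (f.apply _ β)
        rw [hfa β, happ]
      · intro g hg
        rcases List.mem_cons.mp hg with rfl | hg'
        · exact hfb
        · exact hbd g hg'

/-- There exists at least one diff from `β_S` to `β_T`. -/
lemma exists_diff (n : ℕ) (s : ℕ → ℤ) :
    ∃ L, IsDiffRangeAdd (ssAlpha n) L (ssBS n) (ssBT n s) := by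
  refine ⟨(List.finRange (n + 1)).map
    (fun (j : Fin (n + 1)) => ⟨((j : ℕ) : ℝ), ((j : ℕ) : ℝ), le_refl _, ssBT n s j⟩), ?_⟩
  show applyOpsRangeAdd _ _ _ = _
  funext k
  rw [applyOps_point]
  simp only [ssBS, zero_add, List.map_map, Function.comp_def]
  have key : ∀ j : Fin (n + 1),
      (if (OpRangeAdd.mk ((j : ℕ) : ℝ) ((j : ℕ) : ℝ) (le_refl _) (ssBT n s j)).cond
          (ssAlpha n k) then ssBT n s j else 0)
      = if j = k then ssBT n s j else 0 := by
    intro j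
    by_cases hjk : j = k
    · subst hjk
      rw [if_pos, if_pos rfl]
      constructor <;> simp [OpRangeAdd.cond, ssAlpha]
    · rw [if_neg, if_neg hjk]
      rintro ⟨h1, h2⟩
      apply hjk
      simp only [OpRangeAdd.cond, ssAlpha] at h1 h2
      have heq : ((j : ℕ) : ℝ) = ((k : ℕ) : ℝ) := by
        have h1' : ((j : ℕ) : ℝ) ≤ ((k : ℕ) : ℝ) := by exact_mod_cast h1
        have h2' : ((k : ℕ) : ℝ) ≤ ((j : ℕ) : ℝ) := by exact_mod_cast h2
        exact le_antisymm h1' h2'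
      have : (j : ℕ) = (k : ℕ) := by exact_mod_cast heq
      exact Fin.ext this
  rw [List.map_congr_left (fun j _ => key j), ← Fin.sum_univ_def]
  simp [ssBT]

/-- For the SubsetSum instance, the set of diffs from `β_S` to `β_T` under `F(R,+)`
contains a bounded best diff: a best diff in which every operation has a condition
`A ∈ [a', z']` with `a'` and `z'` integers in `{0,…,n}`. -/
theorem subsetSum_range_exists_bounded_best_diff (n : ℕ) (s : ℕ → ℤ) (t : ℤ)
    (ht : 0 < t) (hs0 : s 0 = -t) (hpos : ∀ i, 1 ≤ i → i ≤ n → 0 < s i) :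
    ∃ F : List OpRangeAdd,
      IsBestDiffRangeAdd (ssAlpha n) F (ssBS n) (ssBT n s) ∧
      ∀ f ∈ F, ∃ a' z' : ℤ,
        0 ≤ a' ∧ a' ≤ (n : ℤ) ∧ 0 ≤ z' ∧ z' ≤ (n : ℤ) ∧ f.a = (a' : ℝ) ∧ f.z = (z' : ℝ) := by
  have hne : ∃ m, ∃ L : List OpRangeAdd,
      IsDiffRangeAdd (ssAlpha n) L (ssBS n) (ssBT n s) ∧ L.length = m := by
    obtain ⟨L, hL⟩ := exists_diff n s
    exact ⟨L.length, L, hL, rfl⟩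
  obtain ⟨L, hL, hlen⟩ := Nat.find_spec hne
  obtain ⟨L', hlen', happ, hbd⟩ := roundList n L
  refine ⟨L', ⟨?_, ?_⟩, hbd⟩
  · unfold IsDiffRangeAdd at *
    rw [happ]; exact hL
  · intro L'' hL''
    have hfind : Nat.find hne ≤ L''.length := Nat.find_le ⟨L'', hL'', rfl⟩
    rw [hlen', hlen]; exact hfind
end

section
/- For the SubsetSum instance, the set of diffs from β_S to β_T under F(R,+) contains a bounded best diff F = (f_1,…,f_m), with each f_i = (A ∈ [a_i,z_i], B ← B + b_i) and a_i, z_i integers in {0,…,n}, such that no two distinct operations f_i and f_j satisfy a_i = a_j or z_i = z_j (no two intervals share a left endpoint or share a right endpoint). -/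
open scoped Classical

noncomputable def eff (L : List OpRangeAdd) (v : ℤ) : ℝ :=
  (L.map fun f => if f.cond v then f.b else 0).sum

lemma eff_nil (v : ℤ) : eff [] v = 0 := rfl

lemma eff_cons (f : OpRangeAdd) (L : List OpRangeAdd) (v : ℤ) :
    eff (f :: L) v = (if f.cond v then f.b else 0) + eff L v := by
  simp [eff]

lemma eff_perm {L L' : List OpRangeAdd} (h : L.Perm L') (v : ℤ) : eff L v = eff L' v :=
  (h.map _).sum_eq

lemma applyOps_eff {K : Type*} (α : K → ℤ) (L : List OpRangeAdd) (β : K → ℝ) (k : K) :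
    applyOpsRangeAdd α L β k = β k + eff L (α k) := by
  induction L generalizing β with
  | nil => simp [applyOpsRangeAdd, eff]
  | cons f L ih =>
      have h : applyOpsRangeAdd α (f :: L) β = applyOpsRangeAdd α L (f.apply α β) := rfl
      rw [h, ih, eff_cons, OpRangeAdd.apply]
      split <;> ring

lemma isDiff_iff {K : Type*} (α : K → ℤ) (L : List OpRangeAdd) (βS βT : K → ℝ) :
    IsDiffRangeAdd α L βS βT ↔ ∀ k, βS k + eff L (α k) = βT k := by
  unfold IsDiffRangeAdd
  rw [funext_iff]
  exact forall_congr' fun k => by rw [applyOps_eff]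

lemma ssDiff_iff (n : ℕ) (s : ℕ → ℤ) (L : List OpRangeAdd) :
    IsDiffRangeAdd (ssAlpha n) L (ssBS n) (ssBT n s) ↔
      ∀ k : Fin (n + 1), eff L ((k : ℕ) : ℤ) = ssBT n s k := by
  rw [isDiff_iff]
  exact forall_congr' fun k => by simp [ssBS, ssAlpha]

lemma ssDiff_of_eff_eq (n : ℕ) (s : ℕ → ℤ) {L L' : List OpRangeAdd}
    (hL : IsDiffRangeAdd (ssAlpha n) L (ssBS n) (ssBT n s))
    (h : ∀ v : ℤ, 0 ≤ v → v ≤ n → eff L' v = eff L v) :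
    IsDiffRangeAdd (ssAlpha n) L' (ssBS n) (ssBT n s) := by
  rw [ssDiff_iff] at hL ⊢
  intro k
  rw [h _ (Int.ofNat_nonneg _) (by exact_mod_cast Nat.le_of_lt_succ k.2), hL k]
/-- An operation with integer endpoints. -/
noncomputable def iop (a z : ℤ) (h : a ≤ z) (b : ℝ) : OpRangeAdd :=
  ⟨(a : ℝ), (z : ℝ), by exact_mod_cast h, b⟩

lemma iop_cond (a z : ℤ) (h : a ≤ z) (b : ℝ) (v : ℤ) :
    (iop a z h b).cond v ↔ a ≤ v ∧ v ≤ z := by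
  simp [iop, OpRangeAdd.cond]

lemma cond_int {f : OpRangeAdd} {A Z : ℤ} (ha : f.a = (A : ℝ)) (hz : f.z = (Z : ℝ)) (v : ℤ) :
    f.cond v ↔ A ≤ v ∧ v ≤ Z := by
  simp [OpRangeAdd.cond, ha, hz]

lemma exists_diff_s10 (n : ℕ) (s : ℕ → ℤ) :
    IsDiffRangeAdd (ssAlpha n)
      (List.ofFn fun k : Fin (n+1) => iop ((k:ℕ):ℤ) ((k:ℕ):ℤ) le_rfl (ssBT n s k))
      (ssBS n) (ssBT n s) := by
  rw [ssDiff_iff]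
  intro k'
  unfold eff
  rw [List.map_ofFn, List.sum_ofFn]
  have hiff : ∀ k : Fin (n+1),
      ((iop ((k:ℕ):ℤ) ((k:ℕ):ℤ) le_rfl (ssBT n s k)).cond ((k':ℕ):ℤ)) ↔ k = k' := by
    intro k
    rw [iop_cond]
    constructor
    · rintro ⟨h1, h2⟩
      have : (k:ℕ) = (k':ℕ) := by exact_mod_cast le_antisymm h1 h2
      exact Fin.ext this
    · rintro rfl; exact ⟨le_rfl, le_rfl⟩
  calc (∑ k : Fin (n+1), ((fun f => if f.cond ((k':ℕ):ℤ) then f.b else 0)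
          ((fun k : Fin (n+1) => iop ((k:ℕ):ℤ) ((k:ℕ):ℤ) le_rfl (ssBT n s k)) k)))
      = ∑ k : Fin (n+1), if k = k' then ssBT n s k else 0 := by
        refine Finset.sum_congr rfl fun k _ => ?_
        simp only []
        rw [if_congr (hiff k) rfl rfl]
        rfl
    _ = ssBT n s k' := by simp
def GoodOps (n : ℕ) (L : List OpRangeAdd) : Prop :=
  ∀ f ∈ L, ∃ a' z' : ℤ,
    0 ≤ a' ∧ a' ≤ (n : ℤ) ∧ 0 ≤ z' ∧ z' ≤ (n : ℤ) ∧ f.a = (a' : ℝ) ∧ f.z = (z' : ℝ)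

noncomputable def intify (n : ℕ) (f : OpRangeAdd) : OpRangeAdd :=
  iop (max ⌈f.a⌉ 0) (max (max ⌈f.a⌉ 0) (min ⌊f.z⌋ (n:ℤ))) (le_max_left _ _) f.b

lemma intify_spec (n : ℕ) (f : OpRangeAdd) (w : ℤ) (hw0 : 0 ≤ w) (hwn : w ≤ (n:ℤ))
    (hw : f.cond w) :
    (∀ v : ℤ, 0 ≤ v → v ≤ (n:ℤ) → ((intify n f).cond v ↔ f.cond v)) ∧
    (0 ≤ max ⌈f.a⌉ 0 ∧ max ⌈f.a⌉ 0 ≤ (n:ℤ) ∧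
      0 ≤ max (max ⌈f.a⌉ 0) (min ⌊f.z⌋ (n:ℤ)) ∧
      max (max ⌈f.a⌉ 0) (min ⌊f.z⌋ (n:ℤ)) ≤ (n:ℤ)) := by
  obtain ⟨hwa, hwz⟩ := hw
  have hca : ⌈f.a⌉ ≤ w := Int.ceil_le.mpr hwa
  have hfz : w ≤ ⌊f.z⌋ := Int.le_floor.mpr hwz
  have hAw : max ⌈f.a⌉ 0 ≤ w := max_le hca hw0
  have hwZ : w ≤ min ⌊f.z⌋ (n:ℤ) := le_min hfz hwn
  have hmax : max (max ⌈f.a⌉ 0) (min ⌊f.z⌋ (n:ℤ)) = min ⌊f.z⌋ (n:ℤ) :=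
    max_eq_right (hAw.trans hwZ)
  constructor
  · intro v hv0 hvn
    rw [intify, iop_cond, hmax]
    constructor
    · rintro ⟨h1, h2⟩
      exact ⟨Int.ceil_le.mp ((le_max_left _ _).trans h1),
        Int.le_floor.mp (h2.trans (min_le_left _ _))⟩
    · rintro ⟨h1, h2⟩
      exact ⟨max_le (Int.ceil_le.mpr h1) hv0, le_min (Int.le_floor.mpr h2) hvn⟩
  · refine ⟨le_max_right _ _, hAw.trans hwn, ?_, ?_⟩
    · rw [hmax]; exact le_trans hw0 hwZ
    · rw [hmax]; exact min_le_right _ _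

lemma mem_witness (n : ℕ) (s : ℕ → ℤ) {L : List OpRangeAdd}
    (hL : IsDiffRangeAdd (ssAlpha n) L (ssBS n) (ssBT n s))
    (hmin : ∀ L', IsDiffRangeAdd (ssAlpha n) L' (ssBS n) (ssBT n s) → L.length ≤ L'.length)
    {f : OpRangeAdd} (hf : f ∈ L) : ∃ w : ℤ, 0 ≤ w ∧ w ≤ (n:ℤ) ∧ f.cond w := by
  by_contra h
  push_neg at h
  have hperm : L.Perm (f :: L.erase f) := List.perm_cons_erase hf
  have hd : IsDiffRangeAdd (ssAlpha n) (L.erase f) (ssBS n) (ssBT n s) := by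
    refine ssDiff_of_eff_eq n s hL fun v hv0 hvn => ?_
    rw [eff_perm hperm v, eff_cons, if_neg (h v hv0 hvn)]
    ring
  have h1 := hmin _ hd
  have h2 : (L.erase f).length = L.length - 1 := List.length_erase_of_mem hf
  have h3 : 0 < L.length := List.length_pos_of_mem hf
  omega

lemma intify_diff (n : ℕ) (s : ℕ → ℤ) {L : List OpRangeAdd}
    (hL : IsDiffRangeAdd (ssAlpha n) L (ssBS n) (ssBT n s))
    (hwit : ∀ f ∈ L, ∃ w : ℤ, 0 ≤ w ∧ w ≤ (n:ℤ) ∧ f.cond w) :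
    IsDiffRangeAdd (ssAlpha n) (L.map (intify n)) (ssBS n) (ssBT n s) ∧
      GoodOps n (L.map (intify n)) := by
  constructor
  · refine ssDiff_of_eff_eq n s hL fun v hv0 hvn => ?_
    unfold eff
    rw [List.map_map]
    refine congrArg List.sum (List.map_congr_left fun f hf => ?_)
    obtain ⟨w, hw0, hwn, hw⟩ := hwit f hf
    have hs := (intify_spec n f w hw0 hwn hw).1 v hv0 hvn
    simp only [Function.comp]
    rw [if_congr hs rfl rfl]
    rfl
  · intro g hg
    rw [List.mem_map] at hg
    obtain ⟨f, hf, rfl⟩ := hg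
    obtain ⟨w, hw0, hwn, hw⟩ := hwit f hf
    obtain ⟨_, h1, h2, h3, h4⟩ := intify_spec n f w hw0 hwn hw
    exact ⟨_, _, h1, h2, h3, h4, rfl, rfl⟩
lemma not_pairwise_extract {R : OpRangeAdd → OpRangeAdd → Prop} :
    ∀ L : List OpRangeAdd, ¬ L.Pairwise R →
      ∃ f g L₂, L.Perm (f :: g :: L₂) ∧ ¬ R f g := by
  intro L
  induction L with
  | nil => intro h; exact absurd List.Pairwise.nil h
  | cons x xs ih =>
      intro h
      rw [List.pairwise_cons] at h
      rcases not_and_or.mp h with h1 | h2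
      · push_neg at h1
        obtain ⟨y, hy, hR⟩ := h1
        exact ⟨x, y, xs.erase y, (List.perm_cons_erase hy).cons x, hR⟩
      · obtain ⟨f, g, L₂, hp, hR⟩ := ih h2
        refine ⟨f, g, x :: L₂, ?_, hR⟩
        exact ((hp.cons x).trans (List.Perm.swap f x (g :: L₂))).trans
          ((List.Perm.swap g x L₂).cons f)

lemma split_left (A F G : ℤ) (hAF : A ≤ F) (hFG : F < G) (p q : ℝ) (v : ℤ) :
    (if A ≤ v ∧ v ≤ F then p + q else 0) + (if F + 1 ≤ v ∧ v ≤ G then q else 0)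
      = (if A ≤ v ∧ v ≤ F then p else 0) + (if A ≤ v ∧ v ≤ G then q else 0) := by
  split_ifs <;> first | ring1 | (exfalso; omega)

lemma split_right (A B Z : ℤ) (hAB : A < B) (hBZ : B ≤ Z) (p q : ℝ) (v : ℤ) :
    (if A ≤ v ∧ v ≤ B - 1 then p else 0) + (if B ≤ v ∧ v ≤ Z then p + q else 0)
      = (if A ≤ v ∧ v ≤ Z then p else 0) + (if B ≤ v ∧ v ≤ Z then q else 0) := by
  split_ifs <;> first | ring1 | (exfalso; omega)

noncomputable def mu (n : ℕ) (L : List OpRangeAdd) : ℕ :=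
  (L.map fun f => ((n:ℤ) - ⌊f.a⌋).toNat + (⌊f.z⌋).toNat).sum

lemma mu_perm (n : ℕ) {L L' : List OpRangeAdd} (h : L.Perm L') : mu n L = mu n L' :=
  (h.map _).sum_eq

lemma mu_cons (n : ℕ) (f : OpRangeAdd) (L : List OpRangeAdd) :
    mu n (f :: L) = (((n:ℤ) - ⌊f.a⌋).toNat + (⌊f.z⌋).toNat) + mu n L := by
  simp [mu]
lemma good_cons {n : ℕ} {x : OpRangeAdd} {L : List OpRangeAdd}
    (hx : ∃ a' z' : ℤ, 0 ≤ a' ∧ a' ≤ (n : ℤ) ∧ 0 ≤ z' ∧ z' ≤ (n : ℤ) ∧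
      x.a = (a' : ℝ) ∧ x.z = (z' : ℝ))
    (hL : GoodOps n L) : GoodOps n (x :: L) := by
  intro y hy
  rcases List.mem_cons.mp hy with rfl | hy
  · exact hx
  · exact hL y hy

lemma fix_left (n : ℕ) {f g : OpRangeAdd} {Af Zf Zg : ℤ}
    (haf : f.a = (Af : ℝ)) (hzf : f.z = (Zf : ℝ)) (hag : g.a = (Af : ℝ))
    (hzg : g.z = (Zg : ℝ)) (hAf0 : 0 ≤ Af) (hZgn : Zg ≤ (n : ℤ))
    (hAZf : Af ≤ Zf) (hlt : Zf < Zg) (L₂ : List OpRangeAdd) (hG2 : GoodOps n L₂) :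
    ∃ f' g' : OpRangeAdd,
      (∀ v, eff (f' :: g' :: L₂) v = eff (f :: g :: L₂) v) ∧
      mu n (f' :: g' :: L₂) < mu n (f :: g :: L₂) ∧
      GoodOps n (f' :: g' :: L₂) := by
  refine ⟨iop Af Zf hAZf (f.b + g.b), iop (Zf + 1) Zg (by omega) g.b, ?_, ?_, ?_⟩
  · intro v
    rw [eff_cons, eff_cons, eff_cons, eff_cons, ← add_assoc, ← add_assoc]
    congr 1
    rw [if_congr (iop_cond Af Zf hAZf (f.b + g.b) v) rfl rfl,
      if_congr (iop_cond (Zf + 1) Zg (by omega) g.b v) rfl rfl,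
      if_congr (cond_int haf hzf v) rfl rfl, if_congr (cond_int hag hzg v) rfl rfl]
    have h1 : (iop Af Zf hAZf (f.b + g.b)).b = f.b + g.b := rfl
    have h2 : (iop (Zf + 1) Zg (by omega) g.b).b = g.b := rfl
    rw [h1, h2]
    exact split_left Af Zf Zg hAZf hlt f.b g.b v
  · rw [mu_cons, mu_cons, mu_cons, mu_cons]
    have e1 : (iop Af Zf hAZf (f.b + g.b)).a = ((Af : ℤ) : ℝ) := rfl
    have e2 : (iop Af Zf hAZf (f.b + g.b)).z = ((Zf : ℤ) : ℝ) := rfl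
    have e3 : (iop (Zf + 1) Zg (by omega) g.b).a = ((Zf + 1 : ℤ) : ℝ) := rfl
    have e4 : (iop (Zf + 1) Zg (by omega) g.b).z = ((Zg : ℤ) : ℝ) := rfl
    rw [e1, e2, e3, e4, haf, hzf, hag, hzg, Int.floor_intCast, Int.floor_intCast,
      Int.floor_intCast, Int.floor_intCast]
    omega
  · refine good_cons ⟨Af, Zf, hAf0, by omega, by omega, by omega, rfl, rfl⟩
      (good_cons ⟨Zf + 1, Zg, by omega, by omega, by omega, hZgn, rfl, rfl⟩ hG2)

lemma fix_right (n : ℕ) {f g : OpRangeAdd} {Af Ag Zg : ℤ}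
    (haf : f.a = (Af : ℝ)) (hzf : f.z = (Zg : ℝ)) (hag : g.a = (Ag : ℝ))
    (hzg : g.z = (Zg : ℝ)) (hAf0 : 0 ≤ Af) (hZgn : Zg ≤ (n : ℤ))
    (hAZg : Ag ≤ Zg) (hlt : Af < Ag) (L₂ : List OpRangeAdd) (hG2 : GoodOps n L₂) :
    ∃ f' g' : OpRangeAdd,
      (∀ v, eff (f' :: g' :: L₂) v = eff (f :: g :: L₂) v) ∧
      mu n (f' :: g' :: L₂) < mu n (f :: g :: L₂) ∧
      GoodOps n (f' :: g' :: L₂) := by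
  refine ⟨iop Af (Ag - 1) (by omega) f.b, iop Ag Zg hAZg (f.b + g.b), ?_, ?_, ?_⟩
  · intro v
    rw [eff_cons, eff_cons, eff_cons, eff_cons, ← add_assoc, ← add_assoc]
    congr 1
    rw [if_congr (iop_cond Af (Ag - 1) (by omega) f.b v) rfl rfl,
      if_congr (iop_cond Ag Zg hAZg (f.b + g.b) v) rfl rfl,
      if_congr (cond_int haf hzf v) rfl rfl, if_congr (cond_int hag hzg v) rfl rfl]
    have h1 : (iop Af (Ag - 1) (by omega) f.b).b = f.b := rfl
    have h2 : (iop Ag Zg hAZg (f.b + g.b)).b = f.b + g.b := rfl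
    rw [h1, h2]
    exact split_right Af Ag Zg hlt hAZg f.b g.b v
  · rw [mu_cons, mu_cons, mu_cons, mu_cons]
    have e1 : (iop Af (Ag - 1) (by omega) f.b).a = ((Af : ℤ) : ℝ) := rfl
    have e2 : (iop Af (Ag - 1) (by omega) f.b).z = ((Ag - 1 : ℤ) : ℝ) := rfl
    have e3 : (iop Ag Zg hAZg (f.b + g.b)).a = ((Ag : ℤ) : ℝ) := rfl
    have e4 : (iop Ag Zg hAZg (f.b + g.b)).z = ((Zg : ℤ) : ℝ) := rfl
    rw [e1, e2, e3, e4, haf, hzf, hag, hzg, Int.floor_intCast, Int.floor_intCast,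
      Int.floor_intCast, Int.floor_intCast]
    omega
  · refine good_cons ⟨Af, Ag - 1, hAf0, by omega, by omega, by omega, rfl, rfl⟩
      (good_cons ⟨Ag, Zg, by omega, by omega, by omega, hZgn, rfl, rfl⟩ hG2)
lemma fix_main (n : ℕ) (s : ℕ → ℤ) (m : ℕ)
    (hmin : ∀ L', IsDiffRangeAdd (ssAlpha n) L' (ssBS n) (ssBT n s) → m ≤ L'.length) :
    ∀ N L, mu n L ≤ N → IsDiffRangeAdd (ssAlpha n) L (ssBS n) (ssBT n s) →
      L.length = m → GoodOps n L →
      ∃ F, IsDiffRangeAdd (ssAlpha n) F (ssBS n) (ssBT n s) ∧ F.length = m ∧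
        GoodOps n F ∧ F.Pairwise (fun f g => f.a ≠ g.a ∧ f.z ≠ g.z) := by
  intro N
  induction N using Nat.strong_induction_on with
  | _ N ih =>
  intro L hmu hdiff hlen hGood
  by_cases hp : L.Pairwise (fun f g => f.a ≠ g.a ∧ f.z ≠ g.z)
  · exact ⟨L, hdiff, hlen, hGood, hp⟩
  obtain ⟨f, g, L₂, hperm, hR⟩ := not_pairwise_extract L hp
  have hcol : f.a = g.a ∨ f.z = g.z := by tauto
  have hfm : f ∈ L := hperm.mem_iff.mpr (by simp)
  have hgm : g ∈ L := hperm.mem_iff.mpr (by simp)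
  obtain ⟨Af, Zf, hAf0, hAfn, hZf0, hZfn, haf, hzf⟩ := hGood f hfm
  obtain ⟨Ag, Zg, hAg0, hAgn, hZg0, hZgn, hag, hzg⟩ := hGood g hgm
  have hfle : Af ≤ Zf := by
    have := f.hle; rw [haf, hzf] at this; exact_mod_cast this
  have hgle : Ag ≤ Zg := by
    have := g.hle; rw [hag, hzg] at this; exact_mod_cast this
  have hdiff' : IsDiffRangeAdd (ssAlpha n) (f :: g :: L₂) (ssBS n) (ssBT n s) :=
    ssDiff_of_eff_eq n s hdiff fun v _ _ => (eff_perm hperm v).symm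
  have hlen' : (f :: g :: L₂).length = m := hperm.length_eq ▸ hlen
  have hGood₂ : GoodOps n L₂ := fun x hx =>
    hGood x (hperm.mem_iff.mpr (by simp [hx]))
  have hmu' : mu n (f :: g :: L₂) ≤ N := mu_perm n hperm ▸ hmu
  -- helper to finish from a transformed pair
  have finish : ∀ f' g' : OpRangeAdd,
      (∀ v, eff (f' :: g' :: L₂) v = eff (f :: g :: L₂) v) →
      mu n (f' :: g' :: L₂) < mu n (f :: g :: L₂) →
      GoodOps n (f' :: g' :: L₂) →
      ∃ F, IsDiffRangeAdd (ssAlpha n) F (ssBS n) (ssBT n s) ∧ F.length = m ∧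
        GoodOps n F ∧ F.Pairwise (fun f g => f.a ≠ g.a ∧ f.z ≠ g.z) := by
    intro f' g' heff hmu2 hG'
    have hd' : IsDiffRangeAdd (ssAlpha n) (f' :: g' :: L₂) (ssBS n) (ssBT n s) :=
      ssDiff_of_eff_eq n s hdiff' fun v _ _ => heff v
    exact ih (mu n (f' :: g' :: L₂)) (lt_of_lt_of_le hmu2 hmu') _ le_rfl hd'
      (by simpa using hlen') hG'
  by_cases hA : f.a = g.a
  · by_cases hZ : f.z = g.z
    · -- merge: contradiction with minimality
      exfalso
      set h' : OpRangeAdd := ⟨f.a, f.z, f.hle, f.b + g.b⟩ with hh'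
      have heq : ∀ v, eff (h' :: L₂) v = eff (f :: g :: L₂) v := by
        intro v
        rw [eff_cons, eff_cons, eff_cons]
        have hcg : g.cond v ↔ f.cond v := by
          unfold OpRangeAdd.cond; rw [hA, hZ]
        have hch : h'.cond v ↔ f.cond v := Iff.rfl
        by_cases hv : f.cond v
        · rw [if_pos (hch.mpr hv), if_pos hv, if_pos (hcg.mpr hv)]
          show f.b + g.b + eff L₂ v = _
          ring
        · rw [if_neg (fun hc => hv (hch.mp hc)), if_neg hv,
            if_neg (fun hc => hv (hcg.mp hc))]
          ring
      have hd' : IsDiffRangeAdd (ssAlpha n) (h' :: L₂) (ssBS n) (ssBT n s) :=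
        ssDiff_of_eff_eq n s hdiff' fun v _ _ => heq v
      have h1 := hmin _ hd'
      simp only [List.length_cons] at h1 hlen'
      omega
    · -- same left endpoint, different right endpoints
      have hAA : Ag = Af := by
        have : (Af : ℝ) = (Ag : ℝ) := by rw [← haf, ← hag, hA]
        exact_mod_cast this.symm
      have hZZ : Zf ≠ Zg := by
        intro h; apply hZ; rw [hzf, hzg, h]
      rcases lt_or_gt_of_ne hZZ with hlt | hlt
      · obtain ⟨f', g', heff, hmu2, hG'⟩ :=
          fix_left n haf hzf (hAA ▸ hag) hzg hAf0 hZgn hfle hlt L₂ hGood₂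
        exact finish f' g' heff hmu2 hG'
      · -- swap f and g
        have hsw : ∀ (P : List OpRangeAdd → Prop), P (g :: f :: L₂) → True := fun _ _ => trivial
        obtain ⟨f', g', heff, hmu2, hG'⟩ :=
          fix_left n hag hzg (hAA.symm ▸ haf) hzf hAg0 hZfn hgle hlt L₂ hGood₂
        have hswap : ∀ v, eff (g :: f :: L₂) v = eff (f :: g :: L₂) v := fun v =>
          eff_perm (List.Perm.swap f g L₂) v
        have hmus : mu n (g :: f :: L₂) = mu n (f :: g :: L₂) :=
          mu_perm n (List.Perm.swap f g L₂)
        exact finish f' g' (fun v => (heff v).trans (hswap v))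
          (by rw [← hmus]; exact hmu2) hG'
  · have hZ : f.z = g.z := hcol.resolve_left hA
    have hZZ : Zg = Zf := by
      have : (Zf : ℝ) = (Zg : ℝ) := by rw [← hzf, ← hzg, hZ]
      exact_mod_cast this.symm
    have hAAne : Af ≠ Ag := by
      intro h; apply hA; rw [haf, hag, h]
    rcases lt_or_gt_of_ne hAAne with hlt | hlt
    · obtain ⟨f', g', heff, hmu2, hG'⟩ :=
        fix_right n haf (hZZ ▸ hzf) hag hzg hAf0 hZgn hgle hlt L₂ hGood₂
      exact finish f' g' heff hmu2 hG'
    · obtain ⟨f', g', heff, hmu2, hG'⟩ :=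
        fix_right n hag (hZZ.symm ▸ hzg) haf hzf hAg0 hZfn (hZZ.symm ▸ hfle) hlt L₂ hGood₂
      have hswap : ∀ v, eff (g :: f :: L₂) v = eff (f :: g :: L₂) v := fun v =>
        eff_perm (List.Perm.swap f g L₂) v
      have hmus : mu n (g :: f :: L₂) = mu n (f :: g :: L₂) :=
        mu_perm n (List.Perm.swap f g L₂)
      exact finish f' g' (fun v => (heff v).trans (hswap v))
        (by rw [← hmus]; exact hmu2) hG'

/-- For the SubsetSum instance, the set of diffs from `β_S` to `β_T` under `F(R,+)`
contains a bounded best diff (each condition `A ∈ [a_i, z_i]` with `a_i, z_i` integers in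
`{0,…,n}`) in which no two distinct operations share a left endpoint or share a right
endpoint. -/
theorem subsetSum_range_exists_best_diff_no_collision (n : ℕ) (s : ℕ → ℤ) (t : ℤ)
    (ht : 0 < t) (hs0 : s 0 = -t) (hpos : ∀ i, 1 ≤ i → i ≤ n → 0 < s i) :
    ∃ F : List OpRangeAdd,
      IsBestDiffRangeAdd (ssAlpha n) F (ssBS n) (ssBT n s) ∧
      (∀ f ∈ F, ∃ a' z' : ℤ,
        0 ≤ a' ∧ a' ≤ (n : ℤ) ∧ 0 ≤ z' ∧ z' ≤ (n : ℤ) ∧ f.a = (a' : ℝ) ∧ f.z = (z' : ℝ)) ∧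
      ∀ i j : Fin F.length, i ≠ j →
        (F.get i).a ≠ (F.get j).a ∧ (F.get i).z ≠ (F.get j).z := by
  classical
  have h₀ := exists_diff_s10 n s
  have hP : ∃ m : ℕ, ∃ L : List OpRangeAdd,
      IsDiffRangeAdd (ssAlpha n) L (ssBS n) (ssBT n s) ∧ L.length = m :=
    ⟨_, _, h₀, rfl⟩
  obtain ⟨L, hL, hlen⟩ := Nat.find_spec hP
  set m := Nat.find hP with hm
  have hmin : ∀ L', IsDiffRangeAdd (ssAlpha n) L' (ssBS n) (ssBT n s) →
      m ≤ L'.length := fun L' h' => Nat.find_le ⟨L', h', rfl⟩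
  have hminL : ∀ L', IsDiffRangeAdd (ssAlpha n) L' (ssBS n) (ssBT n s) →
      L.length ≤ L'.length := fun L' h' => hlen ▸ hmin L' h'
  have hwit : ∀ f ∈ L, ∃ w : ℤ, 0 ≤ w ∧ w ≤ (n : ℤ) ∧ f.cond w := fun f hf =>
    mem_witness n s hL hminL hf
  obtain ⟨h1diff, h1good⟩ := intify_diff n s hL hwit
  have h1len : (L.map (intify n)).length = m := by
    rw [List.length_map]; exact hlen
  obtain ⟨F, hF, hFlen, hFGood, hFpair⟩ :=
    fix_main n s m hmin (mu n (L.map (intify n))) (L.map (intify n)) le_rfl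
      h1diff h1len h1good
  refine ⟨F, ⟨hF, fun L' h' => hFlen ▸ hmin L' h'⟩, hFGood, ?_⟩
  intro i j hij
  have hpg := List.pairwise_iff_get.mp hFpair
  rcases lt_or_gt_of_ne hij with h | h
  · exact hpg i j h
  · obtain ⟨h1, h2⟩ := hpg j i h
    exact ⟨h1.symm, h2.symm⟩
end

section
/- In the 2DistinctSCS instance, every diff from the source B-values to the target B-values under the family F(U,←) has total range count at least 2n, and for each k ∈ {1,…,n} at least two of its operations affect partition P_k. -/
open scoped Classical

/-- An operation of the family `F(U,←)`: a finite union of closed real ranges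
`⋃_j [a_j, z_j]` (given as a list of pairs) and a value `b`; the condition is
`A ∈ ⋃_j [a_j, z_j]` and the modifier is the assignment `B ← b`. -/
structure OpUnionAsg where
  ranges : List (ℝ × ℝ)
  b : ℝ

/-- The condition of an operation of `F(U,←)`, evaluated on an `A`-value `v`:
`v` lies in some range of the union. -/
def OpUnionAsg.cond (f : OpUnionAsg) (v : ℤ) : Prop :=
  ∃ p ∈ f.ranges, p.1 ≤ (v : ℝ) ∧ (v : ℝ) ≤ p.2

/-- Applying an operation of `F(U,←)`: every key whose `A`-value lies in the union gets
its `B`-value replaced by `b`; other keys are unchanged. -/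
noncomputable def OpUnionAsg.apply {K : Type*} (α : K → ℤ) (f : OpUnionAsg) (β : K → ℝ) :
    K → ℝ :=
  fun k => if f.cond (α k) then f.b else β k

/-- Successive application of a finite sequence of operations of `F(U,←)`. -/
noncomputable def applyOpsUnionAsg {K : Type*} (α : K → ℤ) (L : List OpUnionAsg)
    (β : K → ℝ) : K → ℝ :=
  L.foldl (fun β' f => f.apply α β') β

/-- `L` is a diff from `βS` to `βT` under `F(U,←)`. -/
def IsDiffUnionAsg {K : Type*} (α : K → ℤ) (L : List OpUnionAsg) (βS βT : K → ℝ) : Prop :=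
  applyOpsUnionAsg α L βS = βT

/-- `A`-values of the 2DistinctSCS instance on the key set `{0,…,5n+1}`:
the keys `5k` and `5k+1` have `A`-value `4k` (for `0 ≤ k ≤ n`), and the keys
`5k-3, 5k-2, 5k-1` have `A`-values `4k-3, 4k-2, 4k-1` (for `1 ≤ k ≤ n`). -/
def scsAlpha (n : ℕ) : Fin (5 * n + 2) → ℤ :=
  fun j => ((4 * ((j : ℕ) / 5) + (if (j : ℕ) % 5 ≤ 1 then 0 else (j : ℕ) % 5 - 1) : ℕ) : ℤ)

/-- Source `B`-values of the 2DistinctSCS instance: `-1` at keys `5k`, `-2` at keys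
`5k+1`, and `0` at the keys `5k-3, 5k-2, 5k-1`. -/
def scsBS (n : ℕ) : Fin (5 * n + 2) → ℝ :=
  fun j => if (j : ℕ) % 5 = 0 then -1 else if (j : ℕ) % 5 = 1 then -2 else 0

/-- Target `B`-values of the 2DistinctSCS instance with symbols `u k, v k` of the string
`s_k`: `-1` at keys `5k`, `-2` at keys `5k+1`, and `u k, v k, u k` at the keys
`5k-3, 5k-2, 5k-1` respectively. -/
noncomputable def scsBT (n : ℕ) (u v : ℕ → ℤ) : Fin (5 * n + 2) → ℝ :=
  fun j =>
    if (j : ℕ) % 5 = 0 then -1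
    else if (j : ℕ) % 5 = 1 then -2
    else if (j : ℕ) % 5 = 3 then (v ((j : ℕ) / 5 + 1) : ℝ)
    else (u ((j : ℕ) / 5 + 1) : ℝ)

/-- The total range count of a sequence of operations of `F(U,←)`: the sum over its
operations of the number of ranges in the operation's condition. -/
def totalRangeCount (L : List OpUnionAsg) : ℕ :=
  (L.map fun f => f.ranges.length).sum

/-- An operation affects partition `P_k` if its condition matches the `A`-value of some
key whose `A`-value lies strictly between `4k - 4` and `4k`. -/
def Affects (n : ℕ) (f : OpUnionAsg) (k : ℕ) : Prop :=
  ∃ j : Fin (5 * n + 2),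
    (4 * (k : ℤ) - 4 < scsAlpha n j ∧ scsAlpha n j < 4 * (k : ℤ)) ∧ f.cond (scsAlpha n j)

/-! The final value of a key is the `b` of the last operation whose condition matches the key's
`A`-value, or its source value if there is none. Two keys with the common `A`-value `4k` but
different fixed `B`-values therefore force every operation of a diff to avoid `4k`, so a single
range never reaches into two partitions. Inside `P_k`, the `A`-values `4k-3` and `4k-2` must be
rewritten to the distinct values `u_k` and `v_k`, which takes two different operations; each of
them spends a range on `P_k`, whence `2n` ranges in total. -/

section General

variable {K : Type*} (α : K → ℤ)

theorem applyOpsUnionAsg_append_singleton (L : List OpUnionAsg) (f : OpUnionAsg)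
    (β : K → ℝ) : applyOpsUnionAsg α (L ++ [f]) β = f.apply α (applyOpsUnionAsg α L β) := by
  simp [applyOpsUnionAsg]

theorem applyOpsUnionAsg_apply_of_forall_not_cond {L : List OpUnionAsg} {k : K}
    (hL : ∀ f ∈ L, ¬ f.cond (α k)) (β : K → ℝ) : applyOpsUnionAsg α L β k = β k := by
  induction L using List.reverseRecOn with
  | nil => rfl
  | append_singleton M f ih =>
    have hf : ¬ f.cond (α k) := hL f (by simp)
    rw [applyOpsUnionAsg_append_singleton, OpUnionAsg.apply, if_neg hf]
    exact ih fun g hg => hL g (by simp [hg])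

theorem exists_mem_cond_applyOpsUnionAsg_apply_eq_b {L : List OpUnionAsg} {k : K}
    (hL : ∃ f ∈ L, f.cond (α k)) (β : K → ℝ) :
    ∃ f ∈ L, f.cond (α k) ∧ applyOpsUnionAsg α L β k = f.b := by
  induction L using List.reverseRecOn with
  | nil => simp at hL
  | append_singleton M f ih =>
    simp only [applyOpsUnionAsg_append_singleton, OpUnionAsg.apply]
    by_cases hf : f.cond (α k)
    · exact ⟨f, by simp, hf, if_pos hf⟩
    · have hM : ∃ g ∈ M, g.cond (α k) := by
        obtain ⟨g, hg, hgk⟩ := hL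
        rcases List.mem_append.mp hg with hg | hg
        · exact ⟨g, hg, hgk⟩
        · exact absurd (List.mem_singleton.mp hg ▸ hgk) hf
      obtain ⟨g, hg, hgk, hgb⟩ := ih hM
      exact ⟨g, by simp [hg], hgk, by rw [if_neg hf, hgb]⟩

theorem applyOpsUnionAsg_apply_eq_of_cond {L : List OpUnionAsg} {k k' : K} (hα : α k = α k')
    (hL : ∃ f ∈ L, f.cond (α k)) (β β' : K → ℝ) :
    applyOpsUnionAsg α L β k = applyOpsUnionAsg α L β' k' := by
  induction L using List.reverseRecOn with
  | nil => simp at hL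
  | append_singleton M f ih =>
    simp only [applyOpsUnionAsg_append_singleton, OpUnionAsg.apply, ← hα]
    by_cases hf : f.cond (α k)
    · rw [if_pos hf, if_pos hf]
    · rw [if_neg hf, if_neg hf]
      obtain ⟨g, hg, hgk⟩ := hL
      rcases List.mem_append.mp hg with hg | hg
      · exact ih ⟨g, hg, hgk⟩
      · exact absurd (List.mem_singleton.mp hg ▸ hgk) hf

variable {α} {L : List OpUnionAsg} {βS βT : K → ℝ}

theorem IsDiffUnionAsg.forall_not_cond_of_ne (hL : IsDiffUnionAsg α L βS βT) {k k' : K}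
    (hα : α k = α k') (hT : βT k ≠ βT k') : ∀ f ∈ L, ¬ f.cond (α k) := by
  intro f hf hfk
  apply hT
  rw [← hL]
  exact applyOpsUnionAsg_apply_eq_of_cond α hα ⟨f, hf, hfk⟩ βS βS

theorem IsDiffUnionAsg.exists_mem_cond_b_eq (hL : IsDiffUnionAsg α L βS βT) {k : K}
    (hST : βS k ≠ βT k) : ∃ f ∈ L, f.cond (α k) ∧ f.b = βT k := by
  rw [← hL] at hST ⊢
  have hk : ∃ f ∈ L, f.cond (α k) := by
    by_contra! h
    exact hST (applyOpsUnionAsg_apply_of_forall_not_cond α h βS).symm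
  obtain ⟨f, hf, hfk, hfb⟩ := exists_mem_cond_applyOpsUnionAsg_apply_eq_b α hk βS
  exact ⟨f, hf, hfk, hfb.symm⟩

end General

theorem two_mul_card_le_totalRangeCount {ι : Type*} {L : List OpUnionAsg} {s : Finset ι}
    {P : OpUnionAsg → ι → Prop}
    (hcard : ∀ f ∈ L, (s.filter (P f)).card ≤ f.ranges.length)
    (htwo : ∀ k ∈ s, ∃ i j : Fin L.length, i ≠ j ∧ P (L.get i) k ∧ P (L.get j) k) :
    2 * s.card ≤ totalRangeCount L := by
  have hper : ∀ k ∈ s, 2 ≤ (Finset.univ.filter fun i : Fin L.length => P (L.get i) k).card := by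
    intro k hk
    obtain ⟨i, j, hij, hi, hj⟩ := htwo k hk
    exact Finset.one_lt_card_iff.mpr ⟨i, j, by simpa using hi, by simpa using hj, hij⟩
  calc 2 * s.card
      = ∑ _k ∈ s, 2 := by rw [Finset.sum_const, smul_eq_mul, mul_comm]
    _ ≤ ∑ k ∈ s, (Finset.univ.filter fun i : Fin L.length => P (L.get i) k).card :=
        Finset.sum_le_sum hper
    _ = ∑ i : Fin L.length, (s.filter (P (L.get i))).card := by
        simp only [Finset.card_filter]
        exact Finset.sum_comm
    _ ≤ ∑ i : Fin L.length, (L.get i).ranges.length :=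
        Finset.sum_le_sum fun i _ => hcard _ (List.get_mem L i)
    _ = totalRangeCount L := (Fin.sum_univ_fun_getElem L fun f => f.ranges.length)

section Instance

variable {n : ℕ} {u v : ℕ → ℤ} {L : List OpUnionAsg}

theorem scs_boundary_keys {k : ℕ} (hk : k ≤ n) : ∃ j j' : Fin (5 * n + 2),
    scsAlpha n j = 4 * k ∧ scsAlpha n j' = 4 * k ∧ scsBT n u v j ≠ scsBT n u v j' := by
  refine ⟨⟨5 * k, by omega⟩, ⟨5 * k + 1, by omega⟩, ?_, ?_, ?_⟩ <;>
    simp [scsAlpha, scsBT, show 5 * k % 5 = 0 by omega, show (5 * k + 1) % 5 = 1 by omega,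
      show 5 * k / 5 = k by omega, show (5 * k + 1) / 5 = k by omega]

theorem scs_first_key {k : ℕ} (hk1 : 1 ≤ k) (hk : k ≤ n) :
    scsAlpha n ⟨5 * k - 3, by omega⟩ = 4 * k - 3 ∧ scsBS n ⟨5 * k - 3, by omega⟩ = 0 ∧
      scsBT n u v ⟨5 * k - 3, by omega⟩ = u k := by
  have hmod : (5 * k - 3) % 5 = 2 := by omega
  have hdiv : (5 * k - 3) / 5 = k - 1 := by omega
  refine ⟨?_, ?_, ?_⟩ <;> simp [scsAlpha, scsBS, scsBT, hmod, hdiv, show k - 1 + 1 = k by omega]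
  omega

theorem scs_second_key {k : ℕ} (hk1 : 1 ≤ k) (hk : k ≤ n) :
    scsAlpha n ⟨5 * k - 2, by omega⟩ = 4 * k - 2 ∧ scsBS n ⟨5 * k - 2, by omega⟩ = 0 ∧
      scsBT n u v ⟨5 * k - 2, by omega⟩ = v k := by
  have hmod : (5 * k - 2) % 5 = 3 := by omega
  have hdiv : (5 * k - 2) / 5 = k - 1 := by omega
  refine ⟨?_, ?_, ?_⟩ <;> simp [scsAlpha, scsBS, scsBT, hmod, hdiv, show k - 1 + 1 = k by omega]
  omega

theorem card_filter_affects_le_length {f : OpUnionAsg} (hf : ∀ k ≤ n, ¬ f.cond (4 * k)) :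
    ((Finset.Icc 1 n).filter (Affects n f)).card ≤ f.ranges.length := by
  let Meets : ℕ → ℝ × ℝ → Prop := fun k p =>
    ∃ a : ℤ, 4 * (k : ℤ) - 4 < a ∧ a < 4 * k ∧ p.1 ≤ a ∧ (a : ℝ) ≤ p.2
  -- a range meeting `P_k` and `P_k'` with `k' < k` contains `4k'`
  have hle : ∀ p ∈ f.ranges, ∀ k k', k' ≤ n → Meets k p → Meets k' p → k ≤ k' := by
    rintro p hp k k' hk' ⟨a, ha1, ha2, ha3, ha4⟩ ⟨a', hb1, hb2, hb3, hb4⟩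
    by_contra! hlt
    refine hf k' hk' ⟨p, hp, hb3.trans ?_, le_trans ?_ ha4⟩ <;> exact_mod_cast (by omega)
  calc ((Finset.Icc 1 n).filter (Affects n f)).card
      ≤ f.ranges.toFinset.card := by
        refine Finset.card_le_card_of_forall_subsingleton Meets ?_ ?_
        · intro k hk
          obtain ⟨-, j, ⟨hj1, hj2⟩, p, hp, hp1, hp2⟩ := Finset.mem_filter.mp hk
          exact ⟨p, List.mem_toFinset.mpr hp, scsAlpha n j, hj1, hj2, hp1, hp2⟩
        · rintro p hp k ⟨hk, hkp⟩ k' ⟨hk', hk'p⟩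
          simp only [Finset.mem_filter, Finset.mem_Icc] at hk hk'
          have hp := List.mem_toFinset.mp hp
          exact le_antisymm (hle p hp k k' hk'.1.2 hkp hk'p) (hle p hp k' k hk.1.2 hk'p hkp)
    _ ≤ f.ranges.length := List.toFinset_card_le _

theorem scs_forall_not_cond_four_mul (hL : IsDiffUnionAsg (scsAlpha n) L (scsBS n) (scsBT n u v))
    {k : ℕ} (hk : k ≤ n) : ∀ f ∈ L, ¬ f.cond (4 * k) := by
  obtain ⟨j, j', hj, hj', hT⟩ := scs_boundary_keys (u := u) (v := v) hk
  exact hj ▸ hL.forall_not_cond_of_ne (hj.trans hj'.symm) hT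

theorem scs_exists_two_affects (hL : IsDiffUnionAsg (scsAlpha n) L (scsBS n) (scsBT n u v))
    {k : ℕ} (hk1 : 1 ≤ k) (hk : k ≤ n) (hu : 0 < u k) (hv : 0 < v k) (huv : u k ≠ v k) :
    ∃ i j : Fin L.length, i ≠ j ∧ Affects n (L.get i) k ∧ Affects n (L.get j) k := by
  obtain ⟨hα₁, hS₁, hT₁⟩ := scs_first_key (u := u) (v := v) hk1 hk
  obtain ⟨hα₂, hS₂, hT₂⟩ := scs_second_key (u := u) (v := v) hk1 hk
  obtain ⟨f, hf, hf₁, hfb⟩ := hL.exists_mem_cond_b_eq (by rw [hS₁, hT₁]; exact_mod_cast hu.ne)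
  obtain ⟨g, hg, hg₂, hgb⟩ := hL.exists_mem_cond_b_eq (by rw [hS₂, hT₂]; exact_mod_cast hv.ne)
  obtain ⟨i, rfl⟩ := List.mem_iff_get.mp hf
  obtain ⟨j, rfl⟩ := List.mem_iff_get.mp hg
  refine ⟨i, j, ?_, ⟨_, ?_, hf₁⟩, ⟨_, ?_, hg₂⟩⟩
  · rintro rfl
    have : (u k : ℝ) = v k := by rw [← hT₁, ← hT₂, ← hfb, hgb]
    exact huv (by exact_mod_cast this)
  · rw [hα₁]; omega
  · rw [hα₂]; omega

end Instance

theorem scs_diff_totalRangeCount_lower_bound_general (n : ℕ) (u v : ℕ → ℤ)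
    (hu : ∀ k, 1 ≤ k → k ≤ n → 0 < u k) (hv : ∀ k, 1 ≤ k → k ≤ n → 0 < v k)
    (huv : ∀ k, 1 ≤ k → k ≤ n → u k ≠ v k)
    (L : List OpUnionAsg) (hL : IsDiffUnionAsg (scsAlpha n) L (scsBS n) (scsBT n u v)) :
    2 * n ≤ totalRangeCount L ∧
      ∀ k, 1 ≤ k → k ≤ n →
        ∃ i j : Fin L.length, i ≠ j ∧ Affects n (L.get i) k ∧ Affects n (L.get j) k := by
  have htwo : ∀ k, 1 ≤ k → k ≤ n →
      ∃ i j : Fin L.length, i ≠ j ∧ Affects n (L.get i) k ∧ Affects n (L.get j) k :=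
    fun k hk1 hk => scs_exists_two_affects hL hk1 hk (hu k hk1 hk) (hv k hk1 hk) (huv k hk1 hk)
  refine ⟨?_, htwo⟩
  have hcount := two_mul_card_le_totalRangeCount (s := Finset.Icc 1 n)
    (fun f hf => card_filter_affects_le_length fun k hk => scs_forall_not_cond_four_mul hL hk f hf)
    (fun k hk => htwo k (Finset.mem_Icc.mp hk).1 (Finset.mem_Icc.mp hk).2)
  simpa using hcount

/-- In the 2DistinctSCS instance, every diff from the source `B`-values to the target
`B`-values under `F(U,←)` has total range count at least `2n`, and for each
`k ∈ {1,…,n}` at least two of its operations affect partition `P_k`. -/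
theorem scs_diff_totalRangeCount_lower_bound (n : ℕ) (u v : ℕ → ℤ)
    (hu : ∀ k, 1 ≤ k → k ≤ n → 0 < u k) (hv : ∀ k, 1 ≤ k → k ≤ n → 0 < v k)
    (huv : ∀ k, 1 ≤ k → k ≤ n → u k ≠ v k) (t : ℕ)
    (L : List OpUnionAsg) (hL : IsDiffUnionAsg (scsAlpha n) L (scsBS n) (scsBT n u v)) :
    2 * n ≤ totalRangeCount L ∧
      ∀ k, 1 ≤ k → k ≤ n →
        ∃ i j : Fin L.length, i ≠ j ∧ Affects n (L.get i) k ∧ Affects n (L.get j) k :=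
  scs_diff_totalRangeCount_lower_bound_general n u v hu hv huv L hL
end
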